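/- arXiv:2203.06710 — 5 statements merged into one kernel-verified Lean document; each statement's English description precedes it below -/
import Mathlib

section
/- Any finite Borel measure σ on ℝ^d can be written uniquely as a sum σ = σ₀ + σ₁ + ⋯ + σ_d where for each e, σ_e is either zero or an at most countable sum of measures, each supported on a distinct e-dimensional affine subspace of ℝ^d that carries positive measure and contains no lower-dimensional affine subspace of positive σ_e-measure. -/
open MeasureTheory

/-- `τ` is either zero or an at most countable sum of `e`-dimensional wall measures with
distinct carriers: each summand is carried by an `e`-dimensional affine subspace that has
positive `τ`-measure and contains no lower-dimensional affine subspace of positive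
`τ`-measure. -/
def IsWallPart (d e : ℕ) (τ : Measure (EuclideanSpace ℝ (Fin d))) : Prop :=
  ∃ (P : ℕ → AffineSubspace ℝ (EuclideanSpace ℝ (Fin d)))
    (μ : ℕ → Measure (EuclideanSpace ℝ (Fin d))),
    τ = Measure.sum μ ∧
    (∀ n, μ n ≠ 0 →
      Module.finrank ℝ (P n).direction = e ∧
      μ n ((P n : Set (EuclideanSpace ℝ (Fin d)))ᶜ) = 0 ∧
      0 < τ (P n : Set (EuclideanSpace ℝ (Fin d))) ∧
      ∀ Q : AffineSubspace ℝ (EuclideanSpace ℝ (Fin d)), Q ≤ P n →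
        Module.finrank ℝ Q.direction < e → τ (Q : Set (EuclideanSpace ℝ (Fin d))) = 0) ∧
    (∀ n m, μ n ≠ 0 → μ m ≠ 0 → n ≠ m → P n ≠ P m)

section Helpers

variable {d : ℕ}

local notation "Ed" => EuclideanSpace ℝ (Fin d)
local notation "Aff" => AffineSubspace ℝ (EuclideanSpace ℝ (Fin d))

lemma aff_measurable (P : Aff) : MeasurableSet (P : Set Ed) :=
  P.closed_of_finiteDimensional.measurableSet

lemma aff_coe_inf (P Q : Aff) : ((P ⊓ Q : Aff) : Set Ed) = (P : Set Ed) ∩ (Q : Set Ed) := by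
  ext x
  simp [AffineSubspace.mem_inf_iff]

/-- Two distinct `e`-dimensional affine subspaces intersect in a null set, provided `τ`
vanishes on all affine subspaces of dimension `< e`. -/
lemma aff_inter_null {τ : Measure Ed} {e : ℕ}
    (hlow : ∀ Q : Aff, Module.finrank ℝ Q.direction < e → τ (Q : Set Ed) = 0)
    {P Q : Aff} (hP : Module.finrank ℝ P.direction = e)
    (hQ : Module.finrank ℝ Q.direction = e) (hne : P ≠ Q) :
    τ ((P : Set Ed) ∩ (Q : Set Ed)) = 0 := by
  rw [← aff_coe_inf]
  rcases Set.eq_empty_or_nonempty ((P ⊓ Q : Aff) : Set Ed) with he | ⟨x, hx⟩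
  · rw [he]; exact measure_empty
  · rcases lt_or_ge (Module.finrank ℝ (P ⊓ Q : Aff).direction) e with h | h
    · exact hlow _ h
    · exfalso
      have hx' : x ∈ ((P : Set Ed) ∩ (Q : Set Ed)) := by
        rw [← aff_coe_inf]; exact hx
      have hxP : x ∈ P := hx'.1
      have hxQ : x ∈ Q := hx'.2
      have h1 : (P ⊓ Q : Aff).direction = P.direction :=
        Submodule.eq_of_le_of_finrank_le (AffineSubspace.direction_le inf_le_left)
          (by rw [hP]; exact h)
      have h2 : (P ⊓ Q : Aff).direction = Q.direction :=
        Submodule.eq_of_le_of_finrank_le (AffineSubspace.direction_le inf_le_right)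
          (by rw [hQ]; exact h)
      exact hne ((AffineSubspace.eq_iff_direction_eq_of_mem hxP hxQ).2 (h1.symm.trans h2))

/-- A wall part of dimension `e` vanishes on every affine subspace of dimension `< e`. -/
lemma IsWallPart.null_of_low {e : ℕ} {τ : Measure Ed} (h : IsWallPart d e τ)
    {Q : Aff} (hQ : Module.finrank ℝ Q.direction < e) : τ (Q : Set Ed) = 0 := by
  obtain ⟨P, μ, hτ, hmain, -⟩ := h
  rw [hτ, Measure.sum_apply _ (aff_measurable Q)]
  refine ENNReal.tsum_eq_zero.2 fun n => ?_
  by_cases hn : μ n = 0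
  · simp [hn]
  obtain ⟨hdim, hcarr, -, hsub⟩ := hmain n hn
  have hkey : τ ((Q ⊓ P n : Aff) : Set Ed) = 0 := by
    refine hsub _ inf_le_right ?_
    calc Module.finrank ℝ (Q ⊓ P n : Aff).direction
        ≤ Module.finrank ℝ Q.direction :=
          Submodule.finrank_mono (AffineSubspace.direction_le inf_le_left)
      _ < e := hQ
  have hsubset : (Q : Set Ed) ⊆ ((Q ⊓ P n : Aff) : Set Ed) ∪ ((P n : Set Ed))ᶜ := by
    rw [aff_coe_inf]
    intro x hxQ
    by_cases hxP : x ∈ (P n : Set Ed)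
    · exact Or.inl ⟨hxQ, hxP⟩
    · exact Or.inr hxP
  have h1 : μ n (Q : Set Ed) ≤ μ n ((Q ⊓ P n : Aff) : Set Ed) + μ n ((P n : Set Ed))ᶜ :=
    (measure_mono hsubset).trans (measure_union_le _ _)
  have h2 : μ n ((Q ⊓ P n : Aff) : Set Ed) = 0 := by
    refine le_antisymm ?_ (zero_le)
    calc μ n ((Q ⊓ P n : Aff) : Set Ed) ≤ Measure.sum μ ((Q ⊓ P n : Aff) : Set Ed) :=
          Measure.le_iff'.1 (Measure.le_sum μ n) _
      _ = 0 := by rw [← hτ]; exact hkey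
  rw [h2, hcarr, add_zero] at h1
  exact le_antisymm h1 (zero_le)

/-- One step of the construction: split off the `e`-dimensional wall part. -/
lemma step_decomp (τ : Measure Ed) [IsFiniteMeasure τ] (e : ℕ)
    (hlow : ∀ Q : Aff, Module.finrank ℝ Q.direction < e → τ (Q : Set Ed) = 0) :
    ∃ w ρ : Measure Ed, τ = w + ρ ∧ IsWallPart d e w ∧ ρ ≤ τ ∧
      ∀ Q : Aff, Module.finrank ℝ Q.direction < e + 1 → ρ (Q : Set Ed) = 0 := by
  classical
  set Ps : Set Aff :=
    {P : Aff | Module.finrank ℝ P.direction = e ∧ 0 < τ (P : Set Ed)} with hPs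
  have hcount : Ps.Countable := by
    set As : Aff → Set Ed :=
      fun P => if Module.finrank ℝ P.direction = e then (P : Set Ed) else ∅ with hAs
    have hc : Set.Countable {P : Aff | 0 < τ (As P)} := by
      refine Measure.countable_meas_pos_of_disjoint_iUnion₀ (μ := τ)
        (fun P => ?_) (fun P Q hne => ?_)
      · by_cases h : Module.finrank ℝ P.direction = e
        · simpa [hAs, h] using (aff_measurable P).nullMeasurableSet
        · simp only [hAs, if_neg h]
          exact MeasurableSet.empty.nullMeasurableSet
      · show τ (As P ∩ As Q) = 0
        by_cases h1 : Module.finrank ℝ P.direction = e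
        · by_cases h2 : Module.finrank ℝ Q.direction = e
          · simp only [hAs, if_pos h1, if_pos h2]
            exact aff_inter_null hlow h1 h2 hne
          · simp [hAs, h2]
        · simp [hAs, h1]
    refine hc.mono fun P hP => ?_
    obtain ⟨h1, h2⟩ := hP
    simpa [hAs, h1] using h2
  obtain ⟨f, hf⟩ := (hcount.insert ⊥).exists_eq_range ⟨⊥, Set.mem_insert _ _⟩
  set U : Set Ed := ⋃ n, ((f n : Aff) : Set Ed) with hU
  have hUm : MeasurableSet U := MeasurableSet.iUnion fun n => aff_measurable _
  set A : ℕ → Set Ed := disjointed (fun n => ((f n : Aff) : Set Ed)) with hA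
  have hAm : ∀ n, MeasurableSet (A n) := MeasurableSet.disjointed fun n => aff_measurable _
  set μ : ℕ → Measure Ed := fun n => τ.restrict (A n) with hμ
  have hsum : Measure.sum μ = τ.restrict U := by
    rw [hU, ← iUnion_disjointed]
    exact (Measure.restrict_iUnion (disjoint_disjointed _) hAm).symm
  have hwle : Measure.sum μ ≤ τ := hsum ▸ Measure.restrict_le_self
  refine ⟨Measure.sum μ, τ.restrict Uᶜ, ?_, ?_, Measure.restrict_le_self, ?_⟩
  · rw [hsum]
    exact (Measure.restrict_add_restrict_compl hUm).symm
  · refine ⟨f, μ, rfl, ?_, ?_⟩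
    · intro n hn
      have hAn : τ (A n) ≠ 0 := fun h0 => hn (Measure.restrict_eq_zero.2 h0)
      have hfn : τ ((f n : Aff) : Set Ed) ≠ 0 := fun h0 =>
        hAn (le_antisymm (le_trans (measure_mono (disjointed_subset _ n)) h0.le) (zero_le))
      have hfmem : f n ∈ insert (⊥ : Aff) Ps := hf ▸ Set.mem_range_self n
      have hfP : f n ∈ Ps := by
        rcases hfmem with h | h
        · exfalso; apply hfn; rw [h, AffineSubspace.bot_coe]; exact measure_empty
        · exact h
      refine ⟨hfP.1, ?_, ?_, ?_⟩
      · rw [hμ]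
        rw [Measure.restrict_apply (aff_measurable (f n)).compl]
        have : ((f n : Aff) : Set Ed)ᶜ ∩ A n = ∅ := by
          apply Set.eq_empty_of_subset_empty
          intro x ⟨hx1, hx2⟩
          exact hx1 (disjointed_subset _ n hx2)
        rw [this]; exact measure_empty
      · have h1 : μ n ((f n : Aff) : Set Ed) = τ (A n) := by
          rw [hμ, Measure.restrict_apply (aff_measurable (f n))]
          congr 1
          exact Set.inter_eq_self_of_subset_right (disjointed_subset _ n)
        calc (0 : ENNReal) < τ (A n) := pos_iff_ne_zero.2 hAn
          _ = μ n ((f n : Aff) : Set Ed) := h1.symm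
          _ ≤ Measure.sum μ ((f n : Aff) : Set Ed) := Measure.le_iff'.1 (Measure.le_sum μ n) _
      · intro Q hQle hQr
        refine le_antisymm ?_ (zero_le)
        calc Measure.sum μ (Q : Set Ed) ≤ τ (Q : Set Ed) := Measure.le_iff'.1 hwle _
          _ = 0 := hlow Q hQr
    · intro n m hn hm hnm heq
      rcases Nat.lt_or_ge n m with hlt | hge
      · apply hm
        rw [hμ]
        apply Measure.restrict_eq_zero.2
        have : A m = ∅ := by
          apply Set.eq_empty_of_subset_empty
          intro x hx
          obtain ⟨m', rfl⟩ : ∃ k, m = k + 1 := ⟨m - 1, by omega⟩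
          rw [hA, disjointed_add_one] at hx
          have hxn : x ∈ ((f n : Aff) : Set Ed) := by rw [heq]; exact hx.1
          exact hx.2 (le_partialSups_of_le (fun k => ((f k : Aff) : Set Ed))
            (Nat.lt_succ_iff.1 hlt) hxn)
        rw [this]; exact measure_empty
      · have hlt : m < n := lt_of_le_of_ne hge (Ne.symm hnm)
        apply hn
        rw [hμ]
        apply Measure.restrict_eq_zero.2
        have : A n = ∅ := by
          apply Set.eq_empty_of_subset_empty
          intro x hx
          obtain ⟨n', rfl⟩ : ∃ k, n = k + 1 := ⟨n - 1, by omega⟩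
          rw [hA, disjointed_add_one] at hx
          have hxm : x ∈ ((f m : Aff) : Set Ed) := by rw [← heq]; exact hx.1
          exact hx.2 (le_partialSups_of_le (fun k => ((f k : Aff) : Set Ed))
            (Nat.lt_succ_iff.1 hlt) hxm)
        rw [this]; exact measure_empty
  · intro Q hQ
    rcases Nat.lt_succ_iff_lt_or_eq.1 hQ with h | h
    · refine le_antisymm ?_ (zero_le)
      calc τ.restrict Uᶜ (Q : Set Ed) ≤ τ (Q : Set Ed) := Measure.le_iff'.1 Measure.restrict_le_self _
        _ = 0 := hlow Q h
    · by_cases h0 : τ (Q : Set Ed) = 0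
      · refine le_antisymm ?_ (zero_le)
        calc τ.restrict Uᶜ (Q : Set Ed) ≤ τ (Q : Set Ed) :=
              Measure.le_iff'.1 Measure.restrict_le_self _
          _ = 0 := h0
      · have hQPs : Q ∈ insert (⊥ : Aff) Ps :=
          Set.mem_insert_of_mem _ ⟨h, pos_iff_ne_zero.2 h0⟩
        rw [hf] at hQPs
        obtain ⟨n, hn⟩ := hQPs
        have hsub : (Q : Set Ed) ⊆ U := by
          rw [← hn]
          exact Set.subset_iUnion (fun k => ((f k : Aff) : Set Ed)) n
        rw [Measure.restrict_apply (aff_measurable Q)]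
        have : (Q : Set Ed) ∩ Uᶜ = ∅ := by
          apply Set.eq_empty_of_subset_empty
          intro x ⟨hx1, hx2⟩
          exact hx2 (hsub hx1)
        rw [this]; exact measure_empty

/-- Iterating the one-step construction. -/
lemma exists_decomp (σ : Measure Ed) [IsFiniteMeasure σ] (k : ℕ) :
    ∃ (F : ℕ → Measure Ed) (ρ : Measure Ed),
      σ = (∑ e ∈ Finset.range k, F e) + ρ ∧ (∀ e < k, IsWallPart d e (F e)) ∧ ρ ≤ σ ∧
      ∀ Q : Aff, Module.finrank ℝ Q.direction < k → ρ (Q : Set Ed) = 0 := by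
  classical
  induction k with
  | zero =>
    exact ⟨fun _ => 0, σ, by simp, fun e he => absurd he (Nat.not_lt_zero e), le_refl σ,
      fun Q hQ => absurd hQ (Nat.not_lt_zero _)⟩
  | succ k ih =>
    obtain ⟨F, ρ, hσ, hW, hle, hlow⟩ := ih
    haveI : IsFiniteMeasure ρ := isFiniteMeasure_of_le σ hle
    obtain ⟨w, ρ', hρ, hw, hρ'le, hlow'⟩ := step_decomp ρ k hlow
    refine ⟨Function.update F k w, ρ', ?_, ?_, hρ'le.trans hle, hlow'⟩
    · rw [Finset.sum_range_succ]
      have h1 : ∀ e ∈ Finset.range k, Function.update F k w e = F e := by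
        intro e he
        exact Function.update_of_ne (Nat.ne_of_lt (Finset.mem_range.1 he)) _ _
      rw [Finset.sum_congr rfl h1, Function.update_self, hσ, hρ, add_assoc]
    · intro e he
      rcases Nat.lt_succ_iff_lt_or_eq.1 he with h | h
      · rw [Function.update_of_ne (Nat.ne_of_lt h)]
        exact hW e h
      · subst h
        rw [Function.update_self]
        exact hw

/-- Uniqueness of the decomposition. -/
lemma uniq_decomp (σ : Measure Ed) [IsFiniteMeasure σ]
    (F G : Fin (d + 1) → Measure Ed)
    (hF : σ = ∑ e : Fin (d + 1), F e) (hFW : ∀ e : Fin (d + 1), IsWallPart d (e : ℕ) (F e))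
    (hG : σ = ∑ e : Fin (d + 1), G e) (hGW : ∀ e : Fin (d + 1), IsWallPart d (e : ℕ) (G e)) :
    F = G := by
  classical
  have main : ∀ n : ℕ, ∀ e : Fin (d + 1), (e : ℕ) = n → F e = G e := by
    intro n
    induction n using Nat.strong_induction_on with
    | _ n IH =>
    intro e he
    -- Step A: F e and G e agree on measurable subsets of e-dimensional affine subspaces.
    have hA : ∀ A : Set Ed, MeasurableSet A → ∀ P : Aff, A ⊆ (P : Set Ed) →
        Module.finrank ℝ P.direction = (e : ℕ) → F e A = G e A := by
      intro A hAm P hAP hPd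
      have herase : ∀ e' ∈ Finset.univ.erase e, F e' A = G e' A := by
        intro e' he'
        have hne : e' ≠ e := Finset.ne_of_mem_erase he'
        rcases Nat.lt_or_ge (e' : ℕ) (e : ℕ) with h | h
        · rw [IH (e' : ℕ) (he ▸ h) e' rfl]
        · have hgt : (e : ℕ) < (e' : ℕ) :=
            lt_of_le_of_ne h (fun hc => hne (Fin.ext hc.symm))
          have h1 : F e' A = 0 := le_antisymm
            ((measure_mono hAP).trans ((hFW e').null_of_low (hPd ▸ hgt)).le) (zero_le)
          have h2 : G e' A = 0 := le_antisymm
            ((measure_mono hAP).trans ((hGW e').null_of_low (hPd ▸ hgt)).le) (zero_le)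
          rw [h1, h2]
      have hFA : σ A = F e A + ∑ e' ∈ Finset.univ.erase e, F e' A := by
        rw [hF, Measure.finset_sum_apply]
        exact (Finset.add_sum_erase _ _ (Finset.mem_univ e)).symm
      have hGA : σ A = G e A + ∑ e' ∈ Finset.univ.erase e, G e' A := by
        rw [hG, Measure.finset_sum_apply]
        exact (Finset.add_sum_erase _ _ (Finset.mem_univ e)).symm
      have hC : ∑ e' ∈ Finset.univ.erase e, F e' A ≠ ⊤ := by
        refine ne_top_of_le_ne_top (measure_ne_top σ A) ?_
        rw [hFA]
        exact le_add_self
      have hsum2 : F e A + ∑ e' ∈ Finset.univ.erase e, F e' A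
          = G e A + ∑ e' ∈ Finset.univ.erase e, F e' A := by
        rw [← hFA, hGA, Finset.sum_congr rfl herase]
      rw [add_comm (F e A), add_comm (G e A)] at hsum2
      exact (ENNReal.add_right_inj hC).1 hsum2
    -- Step B: a wall part agreeing on wall subsets is dominated.
    have key : ∀ H K : Measure Ed, IsWallPart d (e : ℕ) H →
        (∀ A : Set Ed, MeasurableSet A → ∀ P : Aff, A ⊆ (P : Set Ed) →
          Module.finrank ℝ P.direction = (e : ℕ) → H A = K A) →
        ∀ X : Set Ed, MeasurableSet X → H X ≤ K X := by
      intro H K hH hHK X hX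
      obtain ⟨P, μ, rfl, hmain, -⟩ := hH
      set D : ℕ → Set Ed := fun n => if μ n = 0 then ∅ else ((P n : Aff) : Set Ed) with hD
      have hDm : ∀ n, MeasurableSet (D n) := by
        intro n
        by_cases h : μ n = 0
        · simp [hD, h]
        · simpa [hD, h] using aff_measurable (P n)
      set B : ℕ → Set Ed := fun n => X ∩ disjointed D n with hB
      have hBm : ∀ n, MeasurableSet (B n) :=
        fun n => hX.inter (MeasurableSet.disjointed hDm n)
      have hBdisj : Pairwise (Function.onFun Disjoint B) := by
        intro n m hnm
        exact Set.disjoint_of_subset Set.inter_subset_right Set.inter_subset_right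
          (disjoint_disjointed D hnm)
      have hBU : (⋃ n, B n) = X ∩ ⋃ n, D n := by
        rw [hB]
        rw [← Set.inter_iUnion, iUnion_disjointed]
      have hXdiff : Measure.sum μ (X \ ⋃ n, D n) = 0 := by
        rw [Measure.sum_apply _ (hX.diff (MeasurableSet.iUnion hDm))]
        refine ENNReal.tsum_eq_zero.2 fun n => ?_
        by_cases h : μ n = 0
        · simp [h]
        · obtain ⟨-, hcarr, -, -⟩ := hmain n h
          refine le_antisymm (le_trans (measure_mono ?_) hcarr.le) (zero_le)
          intro x hx
          intro hxP
          exact hx.2 (Set.mem_iUnion.2 ⟨n, by simp [hD, h, hxP]⟩)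
      have hXU : Measure.sum μ X = Measure.sum μ (⋃ n, B n) := by
        rw [hBU, ← measure_inter_add_diff X (MeasurableSet.iUnion hDm), hXdiff, add_zero]
      have hterm : ∀ n, Measure.sum μ (B n) = K (B n) := by
        intro n
        by_cases h : μ n = 0
        · have : B n = ∅ := by
            apply Set.eq_empty_of_subset_empty
            refine Set.Subset.trans (Set.inter_subset_right.trans (disjointed_subset D n)) ?_
            simp [hD, h]
          simp [this]
        · obtain ⟨hdim, -, -, -⟩ := hmain n h
          refine hHK (B n) (hBm n) (P n) ?_ hdim
          refine Set.Subset.trans (Set.inter_subset_right.trans (disjointed_subset D n)) ?_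
          simp [hD, h]
      calc Measure.sum μ X = Measure.sum μ (⋃ n, B n) := hXU
        _ = ∑' n, Measure.sum μ (B n) := measure_iUnion hBdisj hBm
        _ = ∑' n, K (B n) := by simp_rw [hterm]
        _ = K (⋃ n, B n) := (measure_iUnion hBdisj hBm).symm
        _ ≤ K X := measure_mono (by rw [hBU]; exact Set.inter_subset_left)
    refine Measure.ext fun X hX => le_antisymm ?_ ?_
    · exact key (F e) (G e) (hFW e) hA X hX
    · exact key (G e) (F e) (hGW e) (fun A hAm P h1 h2 => (hA A hAm P h1 h2).symm) X hX
  funext e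
  exact main (e : ℕ) e rfl

end Helpers

/-- Any finite Borel measure `σ` on `ℝ^d` can be written uniquely as a sum
`σ = σ₀ + σ₁ + ⋯ + σ_d` where each `σ_e` is either zero or an at most countable sum of
`e`-dimensional wall measures with distinct carriers. -/
theorem stmt_2 (d : ℕ) (σ : Measure (EuclideanSpace ℝ (Fin d))) [IsFiniteMeasure σ] :
    ∃! F : Fin (d + 1) → Measure (EuclideanSpace ℝ (Fin d)),
      σ = ∑ e : Fin (d + 1), F e ∧ ∀ e : Fin (d + 1), IsWallPart d (e : ℕ) (F e) := by
  obtain ⟨F, ρ, hσ, hW, -, hlow⟩ := exists_decomp σ (d + 1)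
  have hρ0 : ρ = 0 := by
    rw [← Measure.measure_univ_eq_zero]
    have h1 := hlow ⊤ (by
      rw [AffineSubspace.direction_top]
      simp [finrank_euclideanSpace_fin])
    rwa [AffineSubspace.top_coe] at h1
  have hsum : σ = ∑ e : Fin (d + 1), F (e : ℕ) := by
    rw [hσ, hρ0, add_zero, Fin.sum_univ_eq_sum_range]
  refine ⟨fun e => F (e : ℕ), ⟨hsum, fun e => hW (e : ℕ) e.isLt⟩, ?_⟩
  intro G ⟨hG1, hG2⟩
  exact uniq_decomp σ G (fun e => F (e : ℕ)) hG1 hG2 hsum (fun e => hW (e : ℕ) e.isLt)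
end

section
/- Let σ be a finite Borel measure on the torus 𝕋^d whose Fourier coefficients σ̂(n) tend to 0 as ‖n‖ → ∞ over ℤ^d. Viewing σ as a finite measure on ℝ^d supported on [0,1)^d, the Fourier transform σ̂(t) = ∫ e^{−2πi⟨ℓ,t⟩} dσ(ℓ) tends to 0 as ‖t‖ → ∞ over ℝ^d. -/
/-!
Up to the scaling `t ↦ -2πt`, the Fourier transform of `σ` is the characteristic function
of a measure with bounded support, hence Lipschitz. The translates `w ↦ σ̂(n + w)`,
`n ∈ ℤ^d`, are then equicontinuous on the compact unit cube and tend to `0` pointwise as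
`n → ∞`, so by Arzelà–Ascoli they tend to `0` uniformly in `w`. Since `t = ⌊t⌋ + fract t`
with `fract t` in the cube and `⌊t⌋ → ∞` as `t → ∞`, this gives `σ̂(t) → 0`.
-/

open MeasureTheory Filter Topology Set Complex

theorem norm_exp_mul_I_sub_exp_mul_I_le (a b : ℝ) :
    ‖exp (a * I) - exp (b * I)‖ ≤ |a - b| := by
  have h : exp (a * I) - exp (b * I) = exp (b * I) * (exp (I * ↑(a - b)) - 1) := by
    rw [mul_sub, ← exp_add, mul_one]
    congr 2
    push_cast
    ring
  rw [h, norm_mul, norm_exp_ofReal_mul_I, one_mul]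
  simpa [Real.norm_eq_abs] using Real.norm_exp_I_mul_ofReal_sub_one_le (x := a - b)

theorem lipschitzWith_charFun_of_ae_norm_le {E : Type*} [NormedAddCommGroup E]
    [InnerProductSpace ℝ E] [MeasurableSpace E] [OpensMeasurableSpace E] {μ : Measure E}
    [IsFiniteMeasure μ] {R : NNReal} (hR : ∀ᵐ x ∂μ, ‖x‖ ≤ R) :
    LipschitzWith (R * (μ univ).toNNReal) (charFun μ) := by
  refine LipschitzWith.of_dist_le_mul fun s t => ?_
  have hint (u : E) : Integrable (fun x => exp (inner ℝ x u * I)) μ :=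
    (BoundedContinuousFunction.innerProbChar u).integrable μ
  have hpt :
      ∀ᵐ x ∂μ, ‖exp (inner ℝ x s * I) - exp (inner ℝ x t * I)‖ ≤ R * dist s t := by
    filter_upwards [hR] with x hx
    calc _ ≤ |inner ℝ x s - inner ℝ x t| := norm_exp_mul_I_sub_exp_mul_I_le _ _
      _ = |inner ℝ x (s - t)| := by rw [inner_sub_right]
      _ ≤ ‖x‖ * ‖s - t‖ := abs_real_inner_le_norm x (s - t)
      _ ≤ R * dist s t := by rw [dist_eq_norm]; gcongr
  calc dist (charFun μ s) (charFun μ t)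
      = ‖∫ x, (exp (inner ℝ x s * I) - exp (inner ℝ x t * I)) ∂μ‖ := by
        rw [dist_eq_norm, charFun_apply, charFun_apply, integral_sub (hint s) (hint t)]
    _ ≤ R * dist s t * μ.real univ := norm_integral_le_of_norm_le_const hpt
    _ = ↑(R * (μ univ).toNNReal) * dist s t := by
        rw [measureReal_def]; push_cast; ring

theorem EquicontinuousOn.tendstoUniformlyOn_of_tendsto {X ι α : Type*} [TopologicalSpace X]
    [UniformSpace α] {F : ι → X → α} {f : X → α} {l : Filter ι} {K : Set X}
    (hK : IsCompact K) (hF : EquicontinuousOn F K)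
    (h : ∀ x ∈ K, Tendsto (F · x) l (𝓝 (f x))) : TendstoUniformlyOn F f l K := by
  have := (EquicontinuousOn.tendsto_uniformOnFun_iff_pi' (𝔖 := {K}) (by simpa) (by simpa) l f).2
    (tendsto_pi_nhds.2 fun x => h x (by simpa using x.2))
  rw [UniformOnFun.tendsto_iff_tendstoUniformlyOn] at this
  exact this K rfl

theorem UniformContinuous.uniformEquicontinuous_const_add {E α ι : Type*}
    [SeminormedAddCommGroup E] [PseudoMetricSpace α] {F : E → α} (hF : UniformContinuous F)
    (v : ι → E) : UniformEquicontinuous fun i x => F (v i + x) := by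
  rw [Metric.uniformEquicontinuous_iff]
  intro ε hε
  obtain ⟨δ, hδ, hFδ⟩ := Metric.uniformContinuous_iff.1 hF ε hε
  exact ⟨δ, hδ, fun x y hxy i => hFδ (by rwa [dist_add_left])⟩

theorem UniformContinuous.tendsto_of_tendsto_const_add {E α ι : Type*}
    [SeminormedAddCommGroup E] [PseudoMetricSpace α] {F : E → α} (hF : UniformContinuous F)
    {K : Set E} (hK : IsCompact K) {v : ι → E} {l : Filter ι} {c : α}
    (h : ∀ w ∈ K, Tendsto (fun i => F (v i + w)) l (𝓝 c)) {l' : Filter E} {ψ : E → ι}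
    (hψ : Tendsto ψ l' l) (hψK : ∀ t, t - v (ψ t) ∈ K) : Tendsto F l' (𝓝 c) := by
  have hunif : TendstoUniformlyOn (fun i w => F (v i + w)) (fun _ => c) l K :=
    ((hF.uniformEquicontinuous_const_add v).equicontinuous.equicontinuousOn K)
      |>.tendstoUniformlyOn_of_tendsto hK h
  have hpair : Tendsto (fun t => (ψ t, t - v (ψ t))) l' (l ×ˢ 𝓟 K) :=
    hψ.prodMk (tendsto_principal.2 (Eventually.of_forall hψK))
  rw [nhds_eq_comap_uniformity, tendsto_comap_iff]
  simpa [Function.comp_def] using (tendstoUniformlyOn_iff_tendsto.1 hunif).comp hpair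

theorem EuclideanSpace.isCompact_setOf_mem_Icc {ι : Type*} [Fintype ι] (a b : ι → ℝ) :
    IsCompact {w : EuclideanSpace ℝ ι | ∀ i, w i ∈ Icc (a i) (b i)} := by
  convert (EuclideanSpace.equiv ι ℝ).toHomeomorph.isCompact_preimage.2
    (isCompact_Icc (a := a) (b := b)) using 1
  ext w
  simp [Pi.le_def, forall_and]

theorem EuclideanSpace.tendsto_floor_cocompact_cofinite {ι : Type*} [Fintype ι] :
    Tendsto (fun (t : EuclideanSpace ℝ ι) i => ⌊t i⌋) (cocompact _) cofinite := by
  refine le_cofinite_iff_eventually_ne.2 fun n => mem_cocompact.2 ⟨_,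
    isCompact_setOf_mem_Icc (fun i => (n i : ℝ)) (fun i => n i + 1), fun t ht hfloor => ?_⟩
  subst hfloor
  exact ht fun i => ⟨Int.floor_le _, (Int.lt_floor_add_one _).le⟩

/-- Let `σ` be a finite Borel measure on `𝕋^d`, viewed as a finite measure on
`ℝ^d` supported on `[0,1)^d`, whose Fourier coefficients tend to `0` along `ℤ^d`; moreover
assume (as inherited by absolute continuity) that the twisted measures
`e^{-2πi⟨ℓ,w⟩} dσ(ℓ)`, `w ∈ [0,1]^d`, are also Rajchman on `ℤ^d`, i.e. for every such `w`
the Fourier transform of `σ` tends to `0` along the translate `ℤ^d + w`. Then the Fourier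
transform of `σ` tends to `0` at infinity over all of `ℝ^d`. -/
theorem stmt_4 (d : ℕ)
    (σ : Measure (EuclideanSpace ℝ (Fin d))) [IsFiniteMeasure σ]
    (hsupp : σ {x : EuclideanSpace ℝ (Fin d) | ¬ ∀ i, x i ∈ Set.Ico (0 : ℝ) 1} = 0)
    (hZ : ∀ w : EuclideanSpace ℝ (Fin d), (∀ i, w i ∈ Set.Icc (0 : ℝ) 1) →
      Filter.Tendsto
        (fun n : Fin d → ℤ =>
          ∫ ℓ, Complex.exp (Complex.ofReal
            (-(2 * Real.pi *
              inner ℝ ℓ ((show EuclideanSpace ℝ (Fin d) from WithLp.toLp 2 fun i => (n i : ℝ)) + w))) *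
            Complex.I) ∂σ)
        Filter.cofinite (nhds 0)) :
    Filter.Tendsto
      (fun t : EuclideanSpace ℝ (Fin d) =>
        ∫ ℓ, Complex.exp (Complex.ofReal (-(2 * Real.pi * inner ℝ ℓ t)) * Complex.I) ∂σ)
      (Filter.cocompact (EuclideanSpace ℝ (Fin d))) (nhds 0) := by
  have hcube := EuclideanSpace.isCompact_setOf_mem_Icc (ι := Fin d) (fun _ => 0) (fun _ => 1)
  obtain ⟨R, hR⟩ := hcube.isBounded.exists_norm_le
  have hσR : ∀ᵐ ℓ ∂σ, ‖ℓ‖ ≤ R.toNNReal := by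
    filter_upwards [ae_iff.2 hsupp] with ℓ hℓ
    exact (hR ℓ fun i => Ico_subset_Icc_self (hℓ i)).trans (Real.le_coe_toNNReal R)
  have hchar (t : EuclideanSpace ℝ (Fin d)) :
      ∫ ℓ, exp (ofReal (-(2 * Real.pi * inner ℝ ℓ t)) * I) ∂σ =
        charFun σ (-(2 * Real.pi) • t) := by
    simp [charFun_apply, inner_smul_right]
  have hfract (t : EuclideanSpace ℝ (Fin d)) :
      t - WithLp.toLp 2 (fun i => (⌊t i⌋ : ℝ)) ∈
        {w : EuclideanSpace ℝ (Fin d) | ∀ i, w i ∈ Icc 0 1} :=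
    fun i => by simpa [Int.self_sub_floor] using (Int.fract_lt_one (t i)).le
  simp only [hchar] at hZ ⊢
  exact ((lipschitzWith_charFun_of_ae_norm_le hσR).uniformContinuous.comp
    (uniformContinuous_const_smul _)).tendsto_of_tendsto_const_add hcube hZ
      EuclideanSpace.tendsto_floor_cocompact_cofinite hfract
end

section
/- If the Fourier transform of a finite complex measure μ on ℤ^d tends to zero at infinity, and ν is a finite complex measure absolutely continuous with respect to μ, then the Fourier transform of ν also tends to zero at infinity. -/
open MeasureTheory Filter Complex Set Submodule
open scoped NNReal ENNReal Topology BoundedContinuousFunction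

namespace Stmt5Aux



abbrev Td (d : ℕ) := Fin d → AddCircle (1 : ℝ)

noncomputable def E (d : ℕ) (m : Fin d → ℤ) : C(Td d, ℂ) :=
  ∏ i, (fourier (m i)).comp ⟨fun x => x i, continuous_apply i⟩

lemma E_apply (d : ℕ) (m : Fin d → ℤ) (x : Td d) :
    E d m x = ∏ i, fourier (m i) (x i) := by
  simp [E]

lemma norm_E_apply (d : ℕ) (m : Fin d → ℤ) (x : Td d) : ‖E d m x‖ = 1 := by
  rw [E_apply, norm_prod]
  refine Finset.prod_eq_one fun i _ => ?_
  simp [fourier_apply, Circle.norm_coe]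

lemma E_add (d : ℕ) (m m' : Fin d → ℤ) : E d (m + m') = E d m * E d m' := by
  ext x
  simp only [E_apply, ContinuousMap.mul_apply, ← Finset.prod_mul_distrib]
  exact Finset.prod_congr rfl fun i _ => by simpa [Pi.add_apply] using (fourier_add (m := m i) (n := m' i) (x := x i))

lemma E_zero (d : ℕ) : E d 0 = 1 := by
  ext x
  simp [E_apply, fourier_zero]

lemma E_star (d : ℕ) (m : Fin d → ℤ) : star (E d m) = E d (-m) := by
  ext x
  simp only [ContinuousMap.star_apply, E_apply, starRingEnd_apply, star_prod]
  exact Finset.prod_congr rfl fun i _ => by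
    simpa [Pi.neg_apply] using (fourier_neg (n := m i) (x := x i)).symm
noncomputable def Esub (d : ℕ) : StarSubalgebra ℂ C(Td d, ℂ) where
  toSubalgebra := Algebra.adjoin ℂ (range (E d))
  star_mem' := by
    show Algebra.adjoin ℂ (range (E d)) ≤ star (Algebra.adjoin ℂ (range (E d)))
    refine Algebra.adjoin_le ?_
    rintro - ⟨m, rfl⟩
    exact Algebra.subset_adjoin ⟨-m, (E_star d m).symm⟩

theorem Esub_coe (d : ℕ) :
    Subalgebra.toSubmodule (Esub d).toSubalgebra = span ℂ (range (E d)) := by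
  apply Algebra.adjoin_eq_span_of_subset
  refine Subset.trans ?_ Submodule.subset_span
  intro x hx
  refine Submonoid.closure_induction (fun _ => id) ⟨0, E_zero d⟩ ?_ hx
  rintro - - - - ⟨m, rfl⟩ ⟨m', rfl⟩
  exact ⟨m + m', E_add d m m'⟩

theorem Esub_separatesPoints (d : ℕ) : (Esub d).SeparatesPoints := by
  haveI : Fact ((0:ℝ) < 1) := ⟨one_pos⟩
  intro x y hxy
  obtain ⟨i, hi⟩ : ∃ i, x i ≠ y i := by
    by_contra h; push_neg at h; exact hxy (funext h)
  refine ⟨_, ⟨E d (Pi.single i 1 : Fin d → ℤ), Algebra.subset_adjoin ⟨_, rfl⟩, rfl⟩, ?_⟩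
  dsimp only
  rw [E_apply, E_apply]
  have key : ∀ z : Td d, (∏ j, fourier ((Pi.single i 1 : Fin d → ℤ) j) (z j)) = fourier 1 (z i) := by
    intro z
    rw [Finset.prod_eq_single i (fun j _ hj => by simp [Pi.single_eq_of_ne hj, fourier_zero])
      (by simp)]
    simp
  rw [key, key]
  simp only [fourier_one]
  intro h
  rw [Circle.coe_inj] at h
  exact hi (AddCircle.injective_toCircle one_ne_zero h)

theorem span_E_closure_eq_top (d : ℕ) :
    (span ℂ (range (E d))).topologicalClosure = ⊤ := by
  rw [← Esub_coe]
  exact congr_arg (Subalgebra.toSubmodule <| StarSubalgebra.toSubalgebra ·)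
    (ContinuousMap.starSubalgebra_topologicalClosure_eq_top_of_separatesPoints _
      (Esub_separatesPoints d))

theorem exists_span_approx (d : ℕ) (c : C(Td d, ℂ)) {δ : ℝ} (hδ : 0 < δ) :
    ∃ p ∈ span ℂ (range (E d)), ‖c - p‖ < δ := by
  have : c ∈ (span ℂ (range (E d))).topologicalClosure := by
    rw [span_E_closure_eq_top]; trivial
  have h2 : c ∈ closure ((span ℂ (range (E d)) : Submodule ℂ _) : Set _) := this
  rw [Metric.mem_closure_iff] at h2
  obtain ⟨p, hp, hcp⟩ := h2 δ hδ
  exact ⟨p, hp, by rwa [← dist_eq_norm]⟩variable {d : ℕ} {ρ : Measure (Td d)} [IsFiniteMeasure ρ]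

lemma intE (p : C(Td d, ℂ)) {h : Td d → ℂ} (hh : Integrable h ρ) :
    Integrable (fun x => p x * h x) ρ :=
  hh.bdd_mul p.continuous.aestronglyMeasurable (Eventually.of_forall fun x => p.norm_coe_le_norm x)

/-- The Rajchman property for `E d m * f`. -/
lemma P_E (f : Td d → ℂ) (hf : Integrable f ρ)
    (hμ : Tendsto (fun n : Fin d → ℤ => ∫ x, E d (-n) x * f x ∂ρ) cofinite (nhds 0))
    (m : Fin d → ℤ) :
    Tendsto (fun n : Fin d → ℤ => ∫ x, E d (-n) x * (E d m x * f x) ∂ρ) cofinite (nhds 0) := by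
  have key : (fun n : Fin d → ℤ => ∫ x, E d (-n) x * (E d m x * f x) ∂ρ)
      = (fun n : Fin d → ℤ => ∫ x, E d (-n) x * f x ∂ρ) ∘ (fun n => n - m) := by
    funext n
    show _ = ∫ x, E d (-(n - m)) x * f x ∂ρ
    refine integral_congr_ae (Eventually.of_forall fun x => ?_)
    have h2 : E d (-n) x * E d m x = E d (-(n - m)) x := by
      rw [show -(n - m) = m + -n by abel, E_add]
      simp [mul_comm]
    dsimp only
    rw [← mul_assoc, h2]
  rw [key]
  exact hμ.comp (Function.Injective.tendsto_cofinite (fun a b hab => by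
    simpa using congrArg (· + m) hab))

lemma P_span (f : Td d → ℂ) (hf : Integrable f ρ)
    (hμ : Tendsto (fun n : Fin d → ℤ => ∫ x, E d (-n) x * f x ∂ρ) cofinite (nhds 0))
    {p : C(Td d, ℂ)} (hp : p ∈ span ℂ (range (E d))) :
    Tendsto (fun n : Fin d → ℤ => ∫ x, E d (-n) x * (p x * f x) ∂ρ) cofinite (nhds 0) := by
  induction hp using span_induction with
  | mem q hq =>
    obtain ⟨m, rfl⟩ := hq
    exact P_E f hf hμ m
  | zero => simpa using tendsto_const_nhds
  | add q r hq hr ihq ihr =>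
    have key : (fun n : Fin d → ℤ => ∫ x, E d (-n) x * ((q + r) x * f x) ∂ρ)
        = fun n : Fin d → ℤ => (∫ x, E d (-n) x * (q x * f x) ∂ρ)
          + ∫ x, E d (-n) x * (r x * f x) ∂ρ := by
      funext n
      have h1 : Integrable (fun x => E d (-n) x * (q x * f x)) ρ := by
        simpa only [ContinuousMap.mul_apply, mul_assoc] using intE (E d (-n) * q) hf
      have h2 : Integrable (fun x => E d (-n) x * (r x * f x)) ρ := by
        simpa only [ContinuousMap.mul_apply, mul_assoc] using intE (E d (-n) * r) hf
      rw [show (fun x => E d (-n) x * ((q + r) x * f x))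
          = fun x => (E d (-n) x * (q x * f x)) + (E d (-n) x * (r x * f x)) from
        funext fun x => by simp only [ContinuousMap.add_apply]; ring]
      exact integral_add h1 h2
    rw [key]
    simpa using ihq.add ihr
  | smul a q hq ihq =>
    have key : (fun n : Fin d → ℤ => ∫ x, E d (-n) x * ((a • q) x * f x) ∂ρ)
        = fun n : Fin d → ℤ => a • ∫ x, E d (-n) x * (q x * f x) ∂ρ := by
      funext n
      rw [show (fun x => E d (-n) x * ((a • q) x * f x))
          = fun x => a • (E d (-n) x * (q x * f x)) from
        funext fun x => by simp only [ContinuousMap.smul_apply, smul_eq_mul]; ring]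
      exact integral_smul a _
    rw [key]
    simpa using ihq.const_smul a

lemma tendsto_of_approx (g : Td d → ℂ) (hg : Integrable g ρ)
    (H : ∀ ε : ℝ, 0 < ε → ∃ h₀ : Td d → ℂ, Integrable h₀ ρ ∧
      Tendsto (fun n : Fin d → ℤ => ∫ x, E d (-n) x * h₀ x ∂ρ) cofinite (nhds 0) ∧
      ∫ x, ‖g x - h₀ x‖ ∂ρ ≤ ε / 2) :
    Tendsto (fun n : Fin d → ℤ => ∫ x, E d (-n) x * g x ∂ρ) cofinite (nhds 0) := by
  rw [Metric.tendsto_nhds]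
  intro ε hε
  obtain ⟨h₀, hint, htend, happ⟩ := H ε hε
  have hev : ∀ᶠ n : Fin d → ℤ in cofinite, ‖∫ x, E d (-n) x * h₀ x ∂ρ‖ < ε / 2 := by
    have := Metric.tendsto_nhds.1 htend (ε / 2) (by linarith)
    simpa [dist_eq_norm] using this
  filter_upwards [hev] with n hn
  rw [dist_eq_norm, sub_zero]
  have hsplit : ∫ x, E d (-n) x * g x ∂ρ
      = (∫ x, E d (-n) x * h₀ x ∂ρ) + ∫ x, E d (-n) x * (g x - h₀ x) ∂ρ := by
    have h1 : Integrable (fun x => E d (-n) x * h₀ x) ρ := intE (E d (-n)) hint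
    have h2 : Integrable (fun x => E d (-n) x * (g x - h₀ x)) ρ := intE (E d (-n)) (hg.sub hint)
    rw [show (fun x => E d (-n) x * g x)
        = fun x => E d (-n) x * h₀ x + E d (-n) x * (g x - h₀ x) from
      funext fun x => by ring]
    exact integral_add h1 h2
  have hbound : ‖∫ x, E d (-n) x * (g x - h₀ x) ∂ρ‖ ≤ ε / 2 := by
    refine le_trans (norm_integral_le_integral_norm _) (le_trans (le_of_eq ?_) happ)
    refine integral_congr_ae (Eventually.of_forall fun x => ?_)
    dsimp only
    rw [norm_mul, norm_E_apply, one_mul]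
  calc ‖∫ x, E d (-n) x * g x ∂ρ‖
      ≤ ‖∫ x, E d (-n) x * h₀ x ∂ρ‖ + ‖∫ x, E d (-n) x * (g x - h₀ x) ∂ρ‖ := by
        rw [hsplit]; exact norm_add_le _ _
    _ < ε := by linarith
variable {d : ℕ} {ρ : Measure (Td d)} [IsFiniteMeasure ρ]

theorem main (f g : Td d → ℂ)
    (hf : Integrable f ρ) (hg : Integrable g ρ)
    (hf0 : ∀ᵐ x ∂ρ, f x ≠ 0)
    (hμ : Tendsto (fun n : Fin d → ℤ => ∫ x, E d (-n) x * f x ∂ρ) cofinite (nhds 0)) :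
    Tendsto (fun n : Fin d → ℤ => ∫ x, E d (-n) x * g x ∂ρ) cofinite (nhds 0) := by
  classical
  refine tendsto_of_approx g hg fun ε hε => ?_
  set ε' := ε / 6 with hε'def
  have hε' : 0 < ε' := by positivity
  -- measurable version of g / f
  have hqm : AEStronglyMeasurable (fun x => g x / f x) ρ :=
    (hg.1.aemeasurable.div hf.1.aemeasurable).aestronglyMeasurable
  set qm := hqm.mk _ with hqmdef
  have hqm_meas : StronglyMeasurable qm := hqm.stronglyMeasurable_mk
  have hq_eq : (fun x => g x / f x) =ᵐ[ρ] qm := hqm.ae_eq_mk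
  -- truncations
  set s : ℕ → Td d → ℂ := fun N x => if ‖qm x‖ ≤ N then qm x else 0 with hsdef
  have hs_meas : ∀ N, StronglyMeasurable (s N) := by
    intro N
    exact StronglyMeasurable.ite
      (measurableSet_le hqm_meas.measurable.norm measurable_const) hqm_meas stronglyMeasurable_const
  have hs_bdd : ∀ N x, ‖s N x‖ ≤ N := by
    intro N x
    rw [hsdef]
    dsimp only
    split_ifs with h
    · exact h
    · simp
  have hsf_eq : ∀ x, f x ≠ 0 → g x / f x = qm x → ∀ {N : ℕ}, ‖qm x‖ ≤ N → s N x * f x = g x := by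
    intro x hfx hq N hN
    rw [hsdef]
    dsimp only
    rw [if_pos hN, ← hq]
    exact div_mul_cancel₀ _ hfx
  have hsf_int : ∀ N, Integrable (fun x => s N x * f x) ρ := fun N =>
    hf.bdd_mul (hs_meas N).aestronglyMeasurable (Eventually.of_forall (hs_bdd N))
  -- a.e. facts
  have hkey : ∀ᵐ x ∂ρ, f x ≠ 0 ∧ g x / f x = qm x := hf0.and hq_eq
  -- step 1 : choose N with ∫ ‖g - s N * f‖ ≤ ε'
  have htr : Tendsto (fun N : ℕ => ∫ x, ‖g x - s N x * f x‖ ∂ρ) atTop (nhds 0) := by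
    have h0 : (0 : ℝ) = ∫ x, (0 : ℝ) ∂ρ := by simp
    rw [h0]
    refine tendsto_integral_of_dominated_convergence (fun x => ‖g x‖ + ‖g x‖)
      (fun N => ((hg.sub (hsf_int N)).norm).aestronglyMeasurable) (hg.norm.add hg.norm) ?_ ?_
    · intro N
      filter_upwards [hkey] with x hx
      have hsb : ‖s N x * f x‖ ≤ ‖g x‖ := by
        by_cases h : ‖qm x‖ ≤ N
        · rw [hsf_eq x hx.1 hx.2 h]
        · have hz : s N x = 0 := by rw [hsdef]; exact if_neg h
          simp [hz]
      calc ‖(‖g x - s N x * f x‖)‖ = ‖g x - s N x * f x‖ := by rw [norm_norm]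
        _ ≤ ‖g x‖ + ‖s N x * f x‖ := norm_sub_le _ _
        _ ≤ ‖g x‖ + ‖g x‖ := by linarith
    · filter_upwards [hkey] with x hx
      have hev : ∀ᶠ N : ℕ in atTop, ‖g x - s N x * f x‖ = 0 := by
        filter_upwards [eventually_ge_atTop ⌈‖qm x‖⌉₊] with N hN
        have h : ‖qm x‖ ≤ N := le_trans (Nat.le_ceil _) (by exact_mod_cast hN)
        simp [hsf_eq x hx.1 hx.2 h]
      exact Tendsto.congr' (hev.mono fun N hN => hN.symm) tendsto_const_nhds
  obtain ⟨N, hN⟩ : ∃ N : ℕ, ∫ x, ‖g x - s N x * f x‖ ∂ρ ≤ ε' :=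
    ((htr.eventually (eventually_le_nhds hε')).exists)
  -- the weighted measure
  set μ' : Measure (Td d) := ρ.withDensity (fun x => (‖f x‖₊ : ℝ≥0∞)) with hμ'def
  haveI : IsFiniteMeasure μ' := isFiniteMeasure_withDensity (by
    simpa [hμ'def, enorm_eq_nnnorm] using hf.2.ne)
  have hconv : ∀ u : Td d → ℂ, AEStronglyMeasurable u ρ →
      ∫ x, ‖u x‖ ∂μ' = ∫ x, ‖u x * f x‖ ∂ρ := by
    intro u hu
    rw [hμ'def, integral_withDensity_eq_integral_smul₀ hf.1.nnnorm.aemeasurable]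
    refine integral_congr_ae (Eventually.of_forall fun x => ?_)
    simp [NNReal.smul_def, norm_mul, mul_comm]
  -- step 2 : continuous approximation of s N in L¹(μ')
  have hsN_int' : Integrable (s N) μ' := by
    refine Integrable.mono' (integrable_const (N : ℝ)) ?_ (Eventually.of_forall (hs_bdd N))
    exact (hs_meas N).aestronglyMeasurable
  obtain ⟨c, hc_app, hc_int⟩ := hsN_int'.exists_boundedContinuous_integral_sub_le hε'
  -- step 3 : span approximation of c
  set δ : ℝ := ε' / (∫ x, ‖f x‖ ∂ρ + 1) with hδdef
  have hfn : 0 ≤ ∫ x, ‖f x‖ ∂ρ := integral_nonneg fun x => norm_nonneg _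
  have hδ : 0 < δ := by positivity
  obtain ⟨p, hp_mem, hp_app⟩ := exists_span_approx d c.toContinuousMap hδ
  refine ⟨fun x => p x * f x, intE p hf, P_span f hf hμ hp_mem, ?_⟩
  -- assemble the three bounds
  have b1 : ∫ x, ‖g x - s N x * f x‖ ∂ρ ≤ ε' := hN
  have b2 : ∫ x, ‖s N x * f x - c x * f x‖ ∂ρ ≤ ε' := by
    have := hc_app
    rw [hconv (fun x => s N x - c x)
      ((hs_meas N).aestronglyMeasurable.sub c.continuous.aestronglyMeasurable)] at this
    refine le_trans (le_of_eq ?_) this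
    refine integral_congr_ae (Eventually.of_forall fun x => ?_)
    dsimp only
    rw [← sub_mul]
  have b3 : ∫ x, ‖c x * f x - p x * f x‖ ∂ρ ≤ ε' := by
    have hpt : ∀ x, ‖c x * f x - p x * f x‖ ≤ δ * ‖f x‖ := by
      intro x
      have h1 : ‖c x * f x - p x * f x‖ = ‖(c.toContinuousMap - p) x‖ * ‖f x‖ := by
        rw [← norm_mul]
        congr 1
        simp [sub_mul]
      rw [h1]
      refine mul_le_mul_of_nonneg_right ?_ (norm_nonneg _)
      exact le_trans ((c.toContinuousMap - p).norm_coe_le_norm x) hp_app.le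
    have hint1 : Integrable (fun x => ‖c x * f x - p x * f x‖) ρ := by
      have : Integrable (fun x => (c.toContinuousMap - p) x * f x) ρ := intE _ hf
      refine (this.congr ?_).norm
      refine Eventually.of_forall fun x => ?_
      simp [sub_mul]
    calc ∫ x, ‖c x * f x - p x * f x‖ ∂ρ ≤ ∫ x, δ * ‖f x‖ ∂ρ :=
          integral_mono hint1 (hf.norm.const_mul δ) hpt
      _ = δ * ∫ x, ‖f x‖ ∂ρ := integral_const_mul δ _
      _ ≤ ε' := by
          rw [hδdef]
          rw [div_mul_eq_mul_div, div_le_iff₀ (by positivity)]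
          nlinarith [hε'.le]
  have tri : ∫ x, ‖g x - p x * f x‖ ∂ρ ≤ ∫ x, ‖g x - s N x * f x‖ ∂ρ
      + ∫ x, ‖s N x * f x - c x * f x‖ ∂ρ + ∫ x, ‖c x * f x - p x * f x‖ ∂ρ := by
    have i1 : Integrable (fun x => ‖g x - s N x * f x‖) ρ := (hg.sub (hsf_int N)).norm
    have i2 : Integrable (fun x => ‖s N x * f x - c x * f x‖) ρ :=
      ((hsf_int N).sub (intE c.toContinuousMap hf)).norm
    have i3 : Integrable (fun x => ‖c x * f x - p x * f x‖) ρ :=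
      ((intE c.toContinuousMap hf).sub (intE p hf)).norm
    have hpt : ∀ x, ‖g x - p x * f x‖ ≤ ‖g x - s N x * f x‖
        + ‖s N x * f x - c x * f x‖ + ‖c x * f x - p x * f x‖ := by
      intro x
      calc ‖g x - p x * f x‖
          = ‖(g x - s N x * f x) + (s N x * f x - c x * f x) + (c x * f x - p x * f x)‖ := by
            congr 1
            ring
        _ ≤ _ := norm_add₃_le
    calc ∫ x, ‖g x - p x * f x‖ ∂ρ
        ≤ ∫ x, (‖g x - s N x * f x‖ + ‖s N x * f x - c x * f x‖ + ‖c x * f x - p x * f x‖) ∂ρ :=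
          integral_mono (hg.sub (intE p hf)).norm ((i1.add i2).add i3) hpt
      _ = _ := by
          have i12 : Integrable (fun x => ‖g x - s N x * f x‖ + ‖s N x * f x - c x * f x‖) ρ :=
            i1.add i2
          rw [integral_add i12 i3, integral_add i1 i2]
  calc ∫ x, ‖g x - p x * f x‖ ∂ρ ≤ ε' + ε' + ε' := by linarith
    _ ≤ ε / 2 := by rw [hε'def]; linarith
end Stmt5Aux


/-- Preservation of the Rajchman property under absolute continuity, on the
`d`-torus. A finite complex measure on `𝕋^d` is represented as `μ = f dρ` with `ρ` a finite
positive Borel measure (its total variation) and `f` an a.e. nonvanishing integrable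
density; a finite complex measure absolutely continuous with respect to `μ` is then exactly
one of the form `ν = g dρ` with `g` integrable.  If the Fourier coefficients
`μ̂(n) = ∫ e^{-2πi⟨x,n⟩} f(x) dρ(x)` tend to `0` as `‖n‖ → ∞` in `ℤ^d`, then so do the
Fourier coefficients of `ν`. -/
theorem stmt_5 (d : ℕ)
    (ρ : Measure (Fin d → AddCircle (1 : ℝ))) [IsFiniteMeasure ρ]
    (f g : (Fin d → AddCircle (1 : ℝ)) → ℂ)
    (hf : Integrable f ρ) (hg : Integrable g ρ)
    (hf0 : ∀ᵐ x ∂ρ, f x ≠ 0)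
    (hμ : Filter.Tendsto
      (fun n : Fin d → ℤ => ∫ x, (∏ i, fourier (-(n i)) (x i)) * f x ∂ρ)
      Filter.cofinite (nhds 0)) :
    Filter.Tendsto
      (fun n : Fin d → ℤ => ∫ x, (∏ i, fourier (-(n i)) (x i)) * g x ∂ρ)
      Filter.cofinite (nhds 0) := by
  have conv : ∀ h : (Fin d → AddCircle (1 : ℝ)) → ℂ,
      (fun n : Fin d → ℤ => ∫ x, (∏ i, fourier (-(n i)) (x i)) * h x ∂ρ)
        = fun n : Fin d → ℤ => ∫ x, Stmt5Aux.E d (-n) x * h x ∂ρ := by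
    intro h
    funext n
    refine integral_congr_ae (Filter.Eventually.of_forall fun x => ?_)
    simp [Stmt5Aux.E_apply]
  rw [conv f] at hμ
  rw [conv g]
  exact Stmt5Aux.main f g hf hg hf0 hμ
end

section
/- Let T be a measure-preserving G-action and H ⊆ G a closed subgroup. Then γ = ν + H^⊥ ∈ Ĥ = Ĝ/H^⊥ is an eigenvalue of the restriction T|_H with a non-constant eigenfunction if and only if the reduced spectral measure σ₀^T of T gives positive mass to the coset ν + H^⊥ ⊆ Ĝ. -/
/-!
For a single `g`, equality in Cauchy–Schwarz shows that `f ∘ T g = c̄ f` exactly when the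
correlation `⟨f ∘ T g, f⟩ = ∫ γ̄(g) dσ_f` equals `c̄ ‖f‖² = c̄ σ_f(Ĝ)`, i.e. when the Fourier
coefficient of the spectral measure `σ_f` attains its maximal modulus, i.e. when `σ_f` is
concentrated on `{γ | γ g = c}`. Testing this on a countable dense subset of `H`, `f` is an
eigenfunction of `T|_H` exactly when `σ_f` lives on the coset `{γ | γ|_H = χ}`. A non-constant
eigenfunction minus its mean lies in `L²₀`, so its (nonzero) spectral measure is `≪ σ₀`;
conversely `σ₀` restricted to the coset is the spectral measure of some `f ∈ L²₀`.
-/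

open MeasureTheory
open scoped ComplexConjugate

/-- Equip the Pontryagin dual with its Borel σ-algebra. -/
noncomputable instance pontryaginDualMeasurableSpace
    (A : Type*) [Monoid A] [TopologicalSpace A] :
    MeasurableSpace (PontryaginDual A) := borel _

/-- The inclusion of a subgroup `H ⊆ G` as a continuous monoid homomorphism. -/
def inclHom (G : Type*) [TopologicalSpace G] [AddCommGroup G] (H : AddSubgroup G) :
    ContinuousMonoidHom (Multiplicative ↥H) (Multiplicative G) where
  toFun h := Multiplicative.ofAdd (h.toAdd : G)
  map_one' := rfl
  map_mul' _ _ := rfl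
  continuous_toFun := continuous_subtype_val

instance pontryaginDualBorelSpace (A : Type*) [Monoid A] [TopologicalSpace A] :
    BorelSpace (PontryaginDual A) :=
  ⟨rfl⟩

section SquareIntegrable

variable {X : Type*} [MeasurableSpace X] {μ : Measure X} {f g : X → ℂ}

theorem MeasureTheory.MeasurePreserving.integral_comp_of_aestronglyMeasurable {S : X → X}
    (hS : MeasurePreserving S μ μ) {F : X → ℂ} (hF : AEStronglyMeasurable F μ) :
    ∫ x, F (S x) ∂μ = ∫ x, F x ∂μ := by
  rw [← integral_map hS.aemeasurable (hS.map_eq.symm ▸ hF), hS.map_eq]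

theorem integrable_mul_conj (hf : MemLp f 2 μ) (hg : MemLp g 2 μ) :
    Integrable (fun x => f x * conj (g x)) μ :=
  hf.integrable_mul hg.star

theorem integral_mul_conj_self (f : X → ℂ) :
    ∫ x, f x * conj (f x) ∂μ = ((∫ x, ‖f x‖ ^ 2 ∂μ : ℝ) : ℂ) := by
  simp_rw [Complex.mul_conj, Complex.normSq_eq_norm_sq]
  exact integral_ofReal

theorem ae_eq_zero_of_integral_mul_conj_self_eq_zero (hf : MemLp f 2 μ)
    (h : ∫ x, f x * conj (f x) ∂μ = 0) : f =ᵐ[μ] 0 := by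
  rw [integral_mul_conj_self, Complex.ofReal_eq_zero,
    integral_eq_zero_iff_of_nonneg (fun x => by positivity)
      (hf.integrable_norm_pow (p := 2) two_ne_zero)] at h
  filter_upwards [h] with x hx
  simpa using hx

theorem integral_sub_mul_conj_sub (hf : MemLp f 2 μ) (hg : MemLp g 2 μ) :
    ∫ x, (f x - g x) * conj (f x - g x) ∂μ =
      ∫ x, f x * conj (f x) ∂μ - ∫ x, f x * conj (g x) ∂μ - ∫ x, g x * conj (f x) ∂μ
        + ∫ x, g x * conj (g x) ∂μ := by
  have hff := integrable_mul_conj hf hf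
  have hfg := integrable_mul_conj hf hg
  have hgf := integrable_mul_conj hg hf
  have hgg := integrable_mul_conj hg hg
  have expand : ∀ x, (f x - g x) * conj (f x - g x) =
      f x * conj (f x) - f x * conj (g x) - g x * conj (f x) + g x * conj (g x) := fun x => by
    rw [map_sub]; ring
  simp_rw [expand]
  rw [integral_add ?_ hgg, integral_sub ?_ hgf, integral_sub hff hfg]
  exacts [hff.sub hfg, (hff.sub hfg).sub hgf]

theorem ae_eq_of_integral_mul_conj_eq (hf : MemLp f 2 μ) (hg : MemLp g 2 μ) (C : ℝ)
    (hff : ∫ x, f x * conj (f x) ∂μ = C) (hgg : ∫ x, g x * conj (g x) ∂μ = C)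
    (hfg : ∫ x, f x * conj (g x) ∂μ = C) : f =ᵐ[μ] g := by
  have hgf : ∫ x, g x * conj (f x) ∂μ = C := by
    simpa [mul_comm, hfg] using (integral_conj (f := fun x => f x * conj (g x)) (μ := μ))
  have h := ae_eq_zero_of_integral_mul_conj_self_eq_zero (hf.sub hg)
    (by rw [Pi.sub_def, integral_sub_mul_conj_sub hf hg, hff, hgg, hfg, hgf]; ring)
  filter_upwards [h] with x hx
  exact sub_eq_zero.mp hx

theorem ae_comp_eq_mul_of_integral_mul_conj_eq {S : X → X} (hf : MemLp f 2 μ)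
    (hS : MeasurePreserving S μ μ) {c : ℂ} (hc : ‖c‖ = 1)
    (h : ∫ x, f (S x) * conj (f x) ∂μ = c * ∫ x, f x * conj (f x) ∂μ) :
    (fun x => f (S x)) =ᵐ[μ] fun x => c * f x := by
  have hcc : conj c * c = 1 := by
    rw [mul_comm, Complex.mul_conj, Complex.normSq_eq_norm_sq, hc]; norm_num
  refine ae_eq_of_integral_mul_conj_eq (hf.comp_measurePreserving hS) (hf.const_mul c)
    (∫ x, ‖f x‖ ^ 2 ∂μ) ?_ ?_ ?_
  · rw [hS.integral_comp_of_aestronglyMeasurable (F := fun x => f x * conj (f x))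
      (integrable_mul_conj hf hf).aestronglyMeasurable, integral_mul_conj_self]
  · have hcf : ∀ x, c * f x * conj (c * f x) = f x * conj (f x) := fun x => by
      rw [map_mul]; linear_combination (f x * conj (f x)) * hcc
    simp_rw [hcf, integral_mul_conj_self]
  · have hSf : ∀ x, f (S x) * conj (c * f x) = conj c * (f (S x) * conj (f x)) := fun x => by
      rw [map_mul]; ring
    simp_rw [hSf]
    rw [integral_const_mul, h, ← mul_assoc, hcc, one_mul, integral_mul_conj_self]

theorem not_exists_ae_eq_const_of_integral_eq_zero [IsProbabilityMeasure μ]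
    (h0 : ∫ x, f x ∂μ = 0) (hf : ¬ f =ᵐ[μ] 0) : ¬ ∃ c : ℂ, f =ᵐ[μ] fun _ => c := by
  rintro ⟨c, hc⟩
  obtain rfl : c = 0 := by simpa [integral_congr_ae hc] using h0
  exact hf hc

theorem MeasureTheory.MeasurePreserving.ae_comp_sub_integral_eq_mul {S : X → X}
    (hS : MeasurePreserving S μ μ) (hf : AEStronglyMeasurable f μ) {c : ℂ}
    (h : (fun x => f (S x)) =ᵐ[μ] fun x => c * f x) :
    (fun x => f (S x) - ∫ y, f y ∂μ) =ᵐ[μ] fun x => c * (f x - ∫ y, f y ∂μ) := by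
  have hmean : c * ∫ y, f y ∂μ = ∫ y, f y ∂μ := by
    rw [← integral_const_mul, ← integral_congr_ae h, hS.integral_comp_of_aestronglyMeasurable hf]
  filter_upwards [h] with x hx
  rw [hx, mul_sub, hmean]

theorem exists_centered_conj_eigenfunction [IsProbabilityMeasure μ] {ι : Type*} {S : ι → X → X}
    (hS : ∀ i, MeasurePreserving (S i) μ μ) {c : ι → ℂ} (hf : MemLp f 2 μ)
    (hnc : ¬ ∃ m : ℂ, f =ᵐ[μ] fun _ => m)
    (hfc : ∀ i, (fun x => f (S i x)) =ᵐ[μ] fun x => c i * f x) :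
    ∃ g : X → ℂ, MemLp g 2 μ ∧ ∫ x, g x ∂μ = 0 ∧ ¬ g =ᵐ[μ] 0 ∧
      ∀ i, (fun x => g (S i x)) =ᵐ[μ] fun x => conj (c i) * g x := by
  set m := ∫ x, f x ∂μ
  refine ⟨fun x => conj (f x - m), (hf.sub (memLp_const m)).star, ?_, fun hg => hnc ⟨m, ?_⟩,
    fun i => ?_⟩
  · rw [integral_conj, integral_sub (hf.integrable one_le_two) (integrable_const m)]
    simp [m]
  · filter_upwards [hg] with x hx
    exact sub_eq_zero.1 ((map_eq_zero _).1 hx)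
  · filter_upwards [(hS i).ae_comp_sub_integral_eq_mul hf.1 (hfc i)] with x hx
    rw [← map_mul]
    exact congrArg conj hx

end SquareIntegrable

theorem Complex.eq_one_of_re_eq_one_of_norm_le_one {z : ℂ} (hre : z.re = 1) (hz : ‖z‖ ≤ 1) :
    z = 1 := by
  have him : z.im = 0 := Complex.abs_re_eq_norm.1 <|
    le_antisymm (Complex.abs_re_le_norm z) (by rw [hre, abs_one]; exact hz)
  exact Complex.ext hre him

theorem ae_eq_one_of_integral_eq_measureReal_univ {α : Type*} [MeasurableSpace α]
    {ρ : Measure α} [IsFiniteMeasure ρ] {u : α → ℂ} (hu : AEStronglyMeasurable u ρ)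
    (hu1 : ∀ x, ‖u x‖ ≤ 1) (h : ∫ x, u x ∂ρ = ρ.real Set.univ) : ∀ᵐ x ∂ρ, u x = 1 := by
  have hint : Integrable u ρ :=
    (integrable_const (1 : ℝ)).mono' hu (Filter.Eventually.of_forall hu1)
  have hint_re : Integrable (fun x => (u x).re) ρ := hint.re
  have hre : ∫ x, (u x).re ∂ρ = ρ.real Set.univ := by
    simpa [h] using integral_re hint
  have hdefect : ∫ x, (1 - (u x).re) ∂ρ = 0 := by
    rw [integral_sub (integrable_const 1) hint_re, hre]
    simp
  rw [integral_eq_zero_iff_of_nonneg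
    (fun x => sub_nonneg.2 ((Complex.re_le_norm _).trans (hu1 x)))
    ((integrable_const 1).sub hint_re)] at hdefect
  filter_upwards [hdefect] with x hx
  exact Complex.eq_one_of_re_eq_one_of_norm_le_one (sub_eq_zero.1 hx).symm (hu1 x)

theorem PontryaginDual.continuous_apply {A : Type*} [Monoid A] [TopologicalSpace A] (a : A) :
    Continuous fun γ : PontryaginDual A => (γ a : ℂ) :=
  continuous_subtype_val.comp (continuous_eval_const (F := ContinuousMonoidHom A Circle) a)

section PontryaginDual

variable {A B : Type*} [Monoid A] [TopologicalSpace A] [Monoid B] [TopologicalSpace B]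
  {σ : Measure (PontryaginDual A)}

theorem ae_apply_eq_of_integral_conj_apply_eq [IsFiniteMeasure σ] (a : A) (c : Circle)
    (h : ∫ γ, conj (γ a : ℂ) ∂σ = conj (c : ℂ) * σ.real Set.univ) :
    ∀ᵐ γ ∂σ, γ a = c := by
  have hu := ae_eq_one_of_integral_eq_measureReal_univ
    (u := fun γ : PontryaginDual A => (c : ℂ) * conj (γ a : ℂ))
    (continuous_const.mul (Complex.continuous_conj.comp
      (PontryaginDual.continuous_apply a))).aestronglyMeasurable
    (fun γ => by simp [Circle.norm_coe])
    (by rw [integral_const_mul, h, ← mul_assoc, Complex.mul_conj, Circle.normSq_coe]; simp)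
  filter_upwards [hu] with γ hγ
  rw [← Circle.coe_inv_eq_conj, ← Circle.coe_mul, Circle.coe_eq_one, mul_inv_eq_one] at hγ
  exact hγ.symm

theorem ae_comp_eq_of_forall_ae_apply_eq [TopologicalSpace.SeparableSpace B]
    (φ : ContinuousMonoidHom B A) (χ : PontryaginDual B) (h : ∀ b, ∀ᵐ γ ∂σ, γ (φ b) = χ b) :
    ∀ᵐ γ ∂σ, γ.comp φ = χ := by
  obtain ⟨D, hDc, hD⟩ := TopologicalSpace.exists_countable_dense B
  filter_upwards [(ae_ball_iff hDc).2 fun b _ => h b] with γ hγ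
  exact ContinuousMonoidHom.ext <| congrFun <|
    Continuous.ext_on hD (γ.comp φ).continuous χ.continuous hγ

end PontryaginDual

section SpectralMeasure

variable {G X : Type*} [AddMonoid G] [TopologicalSpace G] [MeasurableSpace X] {μ : Measure X}
  {T : G → X → X} {f : X → ℂ} {σ : Measure (PontryaginDual (Multiplicative G))}

def HasSpectralMeasure (T : G → X → X) (μ : Measure X) (f : X → ℂ)
    (σ : Measure (PontryaginDual (Multiplicative G))) : Prop :=
  ∀ g : G, ∫ x, f (T g x) * conj (f x) ∂μ = ∫ γ, conj (γ (Multiplicative.ofAdd g) : ℂ) ∂σ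

theorem HasSpectralMeasure.integral_mul_conj_self (hσ : HasSpectralMeasure T μ f σ)
    (hid : ∀ x, T 0 x = x) : ∫ x, f x * conj (f x) ∂μ = σ.real Set.univ := by
  simpa [hid] using hσ 0

theorem HasSpectralMeasure.measure_univ_eq_zero_iff [IsFiniteMeasure σ]
    (hσ : HasSpectralMeasure T μ f σ) (hid : ∀ x, T 0 x = x) (hf : MemLp f 2 μ) :
    σ Set.univ = 0 ↔ f =ᵐ[μ] 0 := by
  refine ⟨fun h => ae_eq_zero_of_integral_mul_conj_self_eq_zero hf ?_, fun h => ?_⟩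
  · rw [hσ.integral_mul_conj_self hid, measureReal_def, h]
    simp
  · rw [← measureReal_eq_zero_iff, ← Complex.ofReal_eq_zero, ← hσ.integral_mul_conj_self hid]
    exact integral_eq_zero_of_ae (by filter_upwards [h] with x hx; simp [hx])

theorem HasSpectralMeasure.ae_apply_eq_iff [IsFiniteMeasure σ] (hσ : HasSpectralMeasure T μ f σ)
    (hid : ∀ x, T 0 x = x) (hf : MemLp f 2 μ) {g : G} (hT : MeasurePreserving (T g) μ μ)
    (c : Circle) :
    (∀ᵐ γ ∂σ, γ (Multiplicative.ofAdd g) = c) ↔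
      (fun x => f (T g x)) =ᵐ[μ] fun x => conj (c : ℂ) * f x := by
  constructor
  · intro hc
    refine ae_comp_eq_mul_of_integral_mul_conj_eq hf hT (by simp [Circle.norm_coe]) ?_
    rw [hσ g, integral_congr_ae (hc.mono fun γ hγ => by rw [hγ]), integral_const,
      hσ.integral_mul_conj_self hid, Complex.real_smul, mul_comm]
  · intro hfc
    refine ae_apply_eq_of_integral_conj_apply_eq _ c ?_
    rw [← hσ g, ← hσ.integral_mul_conj_self hid, ← integral_const_mul]
    refine integral_congr_ae ?_
    filter_upwards [hfc] with x hx
    rw [hx, mul_assoc]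

end SpectralMeasure

theorem HasSpectralMeasure.ae_comp_inclHom_eq_iff {G X : Type*} [AddCommGroup G]
    [TopologicalSpace G] [SecondCountableTopology G] {H : AddSubgroup G} [MeasurableSpace X]
    {μ : Measure X} {T : G → X → X} {f : X → ℂ}
    {σ : Measure (PontryaginDual (Multiplicative G))} [IsFiniteMeasure σ]
    (hσ : HasSpectralMeasure T μ f σ) (hid : ∀ x, T 0 x = x) (hf : MemLp f 2 μ)
    (hT : ∀ h : H, MeasurePreserving (T h) μ μ) (χ : PontryaginDual (Multiplicative H)) :
    (∀ᵐ γ ∂σ, γ.comp (inclHom G H) = χ) ↔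
      ∀ h : H, (fun x => f (T h x)) =ᵐ[μ]
        fun x => conj (χ (Multiplicative.ofAdd h) : ℂ) * f x := by
  have : TopologicalSpace.SeparableSpace (Multiplicative H) :=
    inferInstanceAs (TopologicalSpace.SeparableSpace (H : Set G))
  constructor
  · intro hχ h
    refine (hσ.ae_apply_eq_iff hid hf (hT h) _).1 ?_
    filter_upwards [hχ] with γ hγ
    rw [← hγ]
    rfl
  · intro hfχ
    exact ae_comp_eq_of_forall_ae_apply_eq _ χ fun h =>
      (hσ.ae_apply_eq_iff hid hf (hT h.toAdd) _).2 (hfχ h.toAdd)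

theorem stmt_11_general
    (G : Type*) [TopologicalSpace G] [AddCommGroup G]
    [SecondCountableTopology G]
    (H : AddSubgroup G)
    (X : Type*) [MeasurableSpace X] (μ : Measure X) [IsProbabilityMeasure μ]
    (T : G → X → X)
    (hmp : ∀ g, MeasurePreserving (T g) μ μ)
    (hid : ∀ x, T 0 x = x)
    (σ0 : Measure (PontryaginDual (Multiplicative G))) [IsFiniteMeasure σ0]
    (hex : ∀ f : X → ℂ, MemLp f 2 μ → (∫ x, f x ∂μ) = 0 →
      ∃ σf : Measure (PontryaginDual (Multiplicative G)),
        IsFiniteMeasure σf ∧ σf ≪ σ0 ∧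
        ∀ g : G, (∫ x, f (T g x) * (starRingEnd ℂ) (f x) ∂μ) =
          ∫ γ, (starRingEnd ℂ) ((γ (Multiplicative.ofAdd g) : ℂ)) ∂σf)
    (hmax2 : ∀ ρ : Measure (PontryaginDual (Multiplicative G)),
      IsFiniteMeasure ρ → ρ ≪ σ0 →
      ∃ f : X → ℂ, MemLp f 2 μ ∧ (∫ x, f x ∂μ) = 0 ∧
        ∀ g : G, (∫ x, f (T g x) * (starRingEnd ℂ) (f x) ∂μ) =
          ∫ γ, (starRingEnd ℂ) ((γ (Multiplicative.ofAdd g) : ℂ)) ∂ρ)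
    (χ : PontryaginDual (Multiplicative ↥H)) :
    (∃ f : X → ℂ, MemLp f 2 μ ∧ (¬ ∃ c : ℂ, f =ᵐ[μ] fun _ => c) ∧
      ∀ h : ↥H, (fun x => f (T (h : G) x)) =ᵐ[μ]
        fun x => ((χ (Multiplicative.ofAdd h) : ℂ)) * f x) ↔
    0 < σ0 {γ | ContinuousMonoidHom.comp γ (inclHom G H) = χ} := by
  set E : Set (PontryaginDual (Multiplicative G)) := {γ | γ.comp (inclHom G H) = χ}
  have hE : MeasurableSet E := IsClosed.measurableSet (α := PontryaginDual _) <|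
    isClosed_singleton.preimage (ContinuousMonoidHom.continuous_comp_left (inclHom G H))
  constructor
  · rintro ⟨f, hf, hnc, hfχ⟩
    -- with the convention of `hex`, eigenfunctions for `χ` have spectral measure on the coset
    -- of `χ⁻¹`, hence the conjugate
    obtain ⟨g, hg, hg0, hg_ne, hgχ⟩ :=
      exists_centered_conj_eigenfunction (fun h : H => hmp h) hf hnc hfχ
    obtain ⟨σ, hσfin, hσ0, hσ : HasSpectralMeasure T μ g σ⟩ := hex g hg hg0
    have hσE : ∀ᵐ γ ∂σ, γ ∈ E := (hσ.ae_comp_inclHom_eq_iff hid hg (fun h => hmp h) χ).2 hgχ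
    refine pos_iff_ne_zero.2 fun hE0 => hg_ne ((hσ.measure_univ_eq_zero_iff hid hg).1 ?_)
    rw [← Measure.restrict_eq_self_of_ae_mem hσE, Measure.restrict_apply_univ]
    exact hσ0 hE0
  · intro hpos
    obtain ⟨f, hf, hf0, hσ : HasSpectralMeasure T μ f _⟩ := hmax2 (σ0.restrict E) inferInstance
      (Measure.absolutelyContinuous_of_le Measure.restrict_le_self)
    have hfχ := (hσ.ae_comp_inclHom_eq_iff hid hf (fun h => hmp h) χ).1 (ae_restrict_mem hE)
    refine ⟨fun x => conj (f x), hf.star, not_exists_ae_eq_const_of_integral_eq_zero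
      (by rw [integral_conj, hf0, map_zero]) fun hf_zero => hpos.ne' ?_, fun h => ?_⟩
    · rw [← Measure.restrict_apply_univ, hσ.measure_univ_eq_zero_iff hid hf]
      filter_upwards [hf_zero] with x hx
      exact (map_eq_zero _).1 hx
    · filter_upwards [hfχ h] with x hx
      simp [hx]

/-- Let `T` be a measure-preserving `G`-action, `H ⊆ G` a closed subgroup, and
`σ₀` the reduced spectral measure (a measure of maximal spectral type for the Koopman
representation on `L²₀(X,μ)`, characterized by the two hypotheses `hex` and `hmax2` via
Bochner's theorem).  A character `χ ∈ Ĥ = Ĝ/H^⊥` is an eigenvalue of the restriction `T|_H`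
with a non-constant eigenfunction if and only if `σ₀` gives positive mass to the coset
`ν + H^⊥ ⊆ Ĝ` of characters of `G` restricting to `χ` on `H`. -/
theorem stmt_11
    (G : Type*) [TopologicalSpace G] [AddCommGroup G] [IsTopologicalAddGroup G]
    [LocallyCompactSpace G] [SecondCountableTopology G]
    (H : AddSubgroup G) (hH : IsClosed (H : Set G))
    (X : Type*) [MeasurableSpace X] (μ : Measure X) [IsProbabilityMeasure μ]
    (T : G → X → X)
    (hmp : ∀ g, MeasurePreserving (T g) μ μ)
    (hhom : ∀ g h x, T (g + h) x = T g (T h x))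
    (hid : ∀ x, T 0 x = x)
    (σ0 : Measure (PontryaginDual (Multiplicative G))) [IsFiniteMeasure σ0]
    (hex : ∀ f : X → ℂ, MemLp f 2 μ → (∫ x, f x ∂μ) = 0 →
      ∃ σf : Measure (PontryaginDual (Multiplicative G)),
        IsFiniteMeasure σf ∧ σf ≪ σ0 ∧
        ∀ g : G, (∫ x, f (T g x) * (starRingEnd ℂ) (f x) ∂μ) =
          ∫ γ, (starRingEnd ℂ) ((γ (Multiplicative.ofAdd g) : ℂ)) ∂σf)
    (hmax2 : ∀ ρ : Measure (PontryaginDual (Multiplicative G)),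
      IsFiniteMeasure ρ → ρ ≪ σ0 →
      ∃ f : X → ℂ, MemLp f 2 μ ∧ (∫ x, f x ∂μ) = 0 ∧
        ∀ g : G, (∫ x, f (T g x) * (starRingEnd ℂ) (f x) ∂μ) =
          ∫ γ, (starRingEnd ℂ) ((γ (Multiplicative.ofAdd g) : ℂ)) ∂ρ)
    (χ : PontryaginDual (Multiplicative ↥H)) :
    (∃ f : X → ℂ, MemLp f 2 μ ∧ (¬ ∃ c : ℂ, f =ᵐ[μ] fun _ => c) ∧
      ∀ h : ↥H, (fun x => f (T (h : G) x)) =ᵐ[μ]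
        fun x => ((χ (Multiplicative.ofAdd h) : ℂ)) * f x) ↔
    0 < σ0 {γ | ContinuousMonoidHom.comp γ (inclHom G H) = χ} :=
  stmt_11_general G H X μ T hmp hid σ0 hex hmax2 χ
end

section
/- Let T be a weak mixing measure-preserving G-action and H ⊆ G a closed subgroup. Then the restriction T|_H is weak mixing if and only if T|_H is ergodic. -/
/-!
Weak mixing gives ergodicity by taking the trivial character. Conversely, let `f` be an
eigenfunction of `T|_H` with unimodular eigenvalues `χ`. Ergodicity of `T|_H` makes `‖f‖` a.e. equal
to a constant `r`, and since every `T g` commutes with `T|_H`, the function `f · conj (f ∘ T g)` is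
`T|_H`-invariant, hence a.e. equal to its integral `c g`. For `r ≠ 0` this reads
`f ∘ T g = (conj (c g) / r²) f`, so `f` is an eigenfunction of the whole action. Its eigenvalue is a
unimodular character of `G`, measurable because `c` is an integral of a jointly measurable function,
hence continuous by Steinhaus' theorem; weak mixing of `T` then makes `f` constant.
-/

open MeasureTheory Filter Metric
open scoped Pointwise ComplexConjugate Topology

section Steinhaus

variable {G : Type*} [TopologicalSpace G] [AddGroup G] [IsTopologicalAddGroup G]
  [LocallyCompactSpace G] [SecondCountableTopology G] [MeasurableSpace G] [BorelSpace G]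

theorem exists_preimage_ball_sub_mem_nhds_zero {M : Type*} [PseudoMetricSpace M]
    [TopologicalSpace.SeparableSpace M] [MeasurableSpace M] [OpensMeasurableSpace M]
    {α : G → M} (hα : Measurable α) {ε : ℝ} (hε : 0 < ε) :
    ∃ q, α ⁻¹' ball q ε - α ⁻¹' ball q ε ∈ 𝓝 (0 : G) := by
  obtain ⟨D, hDc, hDd⟩ := TopologicalSpace.exists_countable_dense M
  have hcover : ⋃ q ∈ D, α ⁻¹' ball q ε = Set.univ :=
    Set.eq_univ_of_forall fun g => by
      obtain ⟨q, hqD, hq⟩ := hDd.exists_dist_lt (α g) hε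
      exact Set.mem_biUnion hqD (mem_ball.2 hq)
  obtain ⟨q, -, hq⟩ : ∃ q ∈ D, 0 < Measure.addHaar (α ⁻¹' ball q ε) := by
    by_contra! hnull
    have := (measure_biUnion_null_iff hDc).2 fun q hq => nonpos_iff_eq_zero.1 (hnull q hq)
    rw [hcover] at this
    exact isOpen_univ.measure_ne_zero Measure.addHaar ⟨0, trivial⟩ this
  exact ⟨q, Measure.sub_mem_nhds_zero_of_addHaar_pos _ _ (hα measurableSet_ball) hq⟩

theorem continuous_of_measurable_of_map_add_eq_mul {𝕜 : Type*} [NormedDivisionRing 𝕜]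
    [TopologicalSpace.SeparableSpace 𝕜] [MeasurableSpace 𝕜] [OpensMeasurableSpace 𝕜]
    {α : G → 𝕜} (hα : Measurable α) (hnorm : ∀ g, ‖α g‖ = 1)
    (hadd : ∀ g h, α (g + h) = α g * α h) : Continuous α := by
  have hne : ∀ g, α g ≠ 0 := fun g => norm_ne_zero_iff.1 (by simp [hnorm])
  have htendsto : Tendsto α (𝓝 0) (𝓝 1) := by
    refine Metric.tendsto_nhds.2 fun ε hε => ?_
    obtain ⟨q, hq⟩ := exists_preimage_ball_sub_mem_nhds_zero hα (half_pos hε)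
    filter_upwards [hq]
    rintro _ ⟨a, ha, b, hb, rfl⟩
    have hαa : α a = α (a - b) * α b := by rw [← hadd, sub_add_cancel]
    have hαg : α (a - b) - 1 = (α a - α b) * (α b)⁻¹ := by
      rw [hαa, sub_mul, mul_assoc, mul_inv_cancel₀ (hne b), mul_one]
    calc dist (α (a - b)) 1 = ‖α a - α b‖ := by
          rw [dist_eq_norm, hαg, norm_mul, norm_inv, hnorm, inv_one, mul_one]
      _ ≤ dist (α a) q + dist (α b) q := by
          rw [← dist_eq_norm]; exact dist_triangle_right _ _ _
      _ < ε / 2 + ε / 2 := add_lt_add ha hb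
      _ = ε := add_halves ε
  refine continuous_iff_continuousAt.2 fun g₀ => ?_
  have hshift : Tendsto (fun g => -g₀ + g) (𝓝 g₀) (𝓝 0) :=
    (continuous_const_add (-g₀)).tendsto' g₀ 0 (neg_add_cancel g₀)
  have := (htendsto.comp hshift).const_mul (α g₀)
  simpa [ContinuousAt, Function.comp_def, ← hadd] using this

end Steinhaus

def L2Ergodic {X ι : Type*} [MeasurableSpace X] (μ : Measure X) (S : ι → X → X) : Prop :=
  ∀ f : X → ℂ, MemLp f 2 μ → (∀ i, (fun x => f (S i x)) =ᵐ[μ] f) → ∃ c : ℂ, f =ᵐ[μ] fun _ => c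

theorem Complex.eq_conj_div_mul_of_mul_conj_eq {a b c : ℂ} {r : ℝ} (ha : ‖a‖ = r) (hr : r ≠ 0)
    (h : a * conj b = c) : b = conj c / (r : ℂ) ^ 2 * a := by
  have hr2 : (r : ℂ) ^ 2 ≠ 0 := pow_ne_zero 2 (Complex.ofReal_ne_zero.2 hr)
  have hnorm : conj a * a = (r : ℂ) ^ 2 := by
    rw [mul_comm, Complex.mul_conj, Complex.normSq_eq_norm_sq, ha, Complex.ofReal_pow]
  rw [← h, map_mul, Complex.conj_conj, div_mul_eq_mul_div, eq_div_iff hr2]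
  linear_combination -b * hnorm

namespace L2Ergodic

variable {X ι : Type*} [MeasurableSpace X] {μ : Measure X} {S : ι → X → X}
  {χ : ι → ℂ} {f : X → ℂ}

theorem exists_norm_ae_eq_const (herg : L2Ergodic μ S) (hf : MemLp f 2 μ)
    (hχ : ∀ i, ‖χ i‖ = 1) (heig : ∀ i, (fun x => f (S i x)) =ᵐ[μ] fun x => χ i * f x) :
    ∃ r : ℝ, (fun x => ‖f x‖) =ᵐ[μ] fun _ => r := by
  obtain ⟨c, hc⟩ := herg (fun x => (‖f x‖ : ℂ)) hf.norm.ofReal fun i => by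
    filter_upwards [heig i] with x hx
    rw [hx, norm_mul, hχ, one_mul]
  refine ⟨c.re, hc.mono fun x hx => ?_⟩
  simpa using congrArg Complex.re hx

theorem mul_conj_comp_ae_eq_integral [IsProbabilityMeasure μ] (herg : L2Ergodic μ S)
    (hf : AEStronglyMeasurable f μ) (hχ : ∀ i, ‖χ i‖ = 1)
    (heig : ∀ i, (fun x => f (S i x)) =ᵐ[μ] fun x => χ i * f x)
    {r : ℝ} (hr : (fun x => ‖f x‖) =ᵐ[μ] fun _ => r)
    {U : X → X} (hU : MeasurePreserving U μ μ) (hcomm : ∀ i x, U (S i x) = S i (U x)) :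
    (fun x => f x * conj (f (U x))) =ᵐ[μ] fun _ => ∫ y, f y * conj (f (U y)) ∂μ := by
  have hfU : AEStronglyMeasurable (fun x => f (U x)) μ := hf.comp_measurePreserving hU
  have hrU : (fun x => ‖f (U x)‖) =ᵐ[μ] fun _ => r := hU.quasiMeasurePreserving.ae_eq_comp hr
  have hmem : MemLp (fun x => f x * conj (f (U x))) 2 μ := by
    refine MemLp.of_bound (hf.mul (Complex.continuous_conj.comp_aestronglyMeasurable hfU))
      (r * r) ?_
    filter_upwards [hr, hrU] with x h1 h2
    rw [norm_mul, Complex.norm_conj, h1, h2]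
  obtain ⟨c, hc⟩ := herg _ hmem fun i => by
    have heigU : (fun x => f (S i (U x))) =ᵐ[μ] fun x => χ i * f (U x) :=
      hU.quasiMeasurePreserving.ae_eq_comp (heig i)
    filter_upwards [heig i, heigU] with x h1 h2
    rw [hcomm, h1, h2, map_mul, mul_mul_mul_comm, Complex.mul_conj, Complex.normSq_eq_norm_sq,
      hχ, one_pow, Complex.ofReal_one, one_mul]
  rwa [integral_congr_ae hc, integral_const, probReal_univ, one_smul]

end L2Ergodic

section Action

variable {G X : Type*} [MeasurableSpace X] {μ : Measure X} {T : G → X → X} {f : X → ℂ}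

theorem measurable_integral_mul_conj_comp [MeasurableSpace G] [SFinite μ]
    (hf : AEStronglyMeasurable f μ) (hmp : ∀ g, MeasurePreserving (T g) μ μ)
    (hT : Measurable fun p : G × X => T p.1 p.2) :
    Measurable fun g => ∫ x, f x * conj (f (T g x)) ∂μ := by
  set f' := hf.mk f
  have hf' : Measurable f' := hf.stronglyMeasurable_mk.measurable
  have hF : StronglyMeasurable fun p : G × X => f' p.2 * conj (f' (T p.1 p.2)) :=
    ((hf'.comp measurable_snd).mul (Complex.continuous_conj.measurable.comp (hf'.comp hT))).stronglyMeasurable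
  convert (hF.integral_prod_right' (ν := μ)).measurable using 2 with g
  refine integral_congr_ae ?_
  filter_upwards [hf.ae_eq_mk, (hmp g).quasiMeasurePreserving.ae_eq_comp hf.ae_eq_mk]
    with x h1 h2
  simp only [Function.comp_apply] at h2
  rw [h1, h2]

theorem norm_eq_one_of_ae_comp_eq_mul [NeZero μ] {U : X → X} (hU : MeasurePreserving U μ μ)
    {r : ℝ} (hr : (fun x => ‖f x‖) =ᵐ[μ] fun _ => r) (hr0 : r ≠ 0) {a : ℂ}
    (heig : (fun x => f (U x)) =ᵐ[μ] fun x => a * f x) : ‖a‖ = 1 := by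
  obtain ⟨x, hx, hUx, hx'⟩ :=
    (heig.and ((hU.quasiMeasurePreserving.ae_eq_comp hr).and hr)).exists
  simp only [Function.comp_apply] at hx hUx hx'
  rw [hx, norm_mul, hx'] at hUx
  exact mul_eq_right₀ hr0 |>.1 hUx

theorem map_add_eq_mul_of_ae_comp_eq_mul [AddGroup G] [NeZero μ]
    (hmp : ∀ g, MeasurePreserving (T g) μ μ) (hhom : ∀ g h x, T (g + h) x = T g (T h x))
    (hf : ∀ᵐ x ∂μ, f x ≠ 0) {α : G → ℂ}
    (heig : ∀ g, (fun x => f (T g x)) =ᵐ[μ] fun x => α g * f x) (g h : G) :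
    α (g + h) = α g * α h := by
  have hcomp : (fun x => f (T g (T h x))) =ᵐ[μ] fun x => α g * f (T h x) :=
    (hmp h).quasiMeasurePreserving.ae_eq_comp (heig g)
  obtain ⟨x, hx0, hgh, hg, hh⟩ := (hf.and ((heig (g + h)).and (hcomp.and (heig h)))).exists
  simp only [hhom] at hgh hg hh
  refine mul_right_cancel₀ hx0 ?_
  rw [← hgh, hg, hh, mul_assoc]

end Action

theorem L2Ergodic.exists_character_of_commute
    {G X ι : Type*} [TopologicalSpace G] [AddGroup G] [IsTopologicalAddGroup G]
    [LocallyCompactSpace G] [SecondCountableTopology G] [MeasurableSpace G] [BorelSpace G]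
    [MeasurableSpace X] {μ : Measure X} [IsProbabilityMeasure μ] {T : G → X → X}
    (hmp : ∀ g, MeasurePreserving (T g) μ μ) (hhom : ∀ g h x, T (g + h) x = T g (T h x))
    (hT : Measurable fun p : G × X => T p.1 p.2)
    {S : ι → X → X} (herg : L2Ergodic μ S) (hcomm : ∀ g i x, T g (S i x) = S i (T g x))
    {χ : ι → ℂ} (hχ : ∀ i, ‖χ i‖ = 1) {f : X → ℂ} (hf : MemLp f 2 μ)
    (heig : ∀ i, (fun x => f (S i x)) =ᵐ[μ] fun x => χ i * f x) :
    ∃ α : G → ℂ, Continuous α ∧ (∀ g, ‖α g‖ = 1) ∧ (∀ g h, α (g + h) = α g * α h) ∧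
      ∀ g, (fun x => f (T g x)) =ᵐ[μ] fun x => α g * f x := by
  obtain ⟨r, hr⟩ := herg.exists_norm_ae_eq_const hf hχ heig
  by_cases hr0 : r = 0
  · refine ⟨1, continuous_const, fun _ => norm_one, fun _ _ => (mul_one 1).symm, fun g => ?_⟩
    have hf0 : f =ᵐ[μ] 0 := hr.mono fun x hx => norm_eq_zero.1 (hx.trans hr0)
    filter_upwards [hf0, (hmp g).quasiMeasurePreserving.ae_eq_comp hf0] with x h1 h2
    simp_all
  set α : G → ℂ := fun g => conj (∫ x, f x * conj (f (T g x)) ∂μ) / (r : ℂ) ^ 2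
  have heigG : ∀ g, (fun x => f (T g x)) =ᵐ[μ] fun x => α g * f x := fun g => by
    filter_upwards [herg.mul_conj_comp_ae_eq_integral hf.1 hχ heig hr (hmp g) (hcomm g), hr]
      with x hx hxr
    exact Complex.eq_conj_div_mul_of_mul_conj_eq hxr hr0 hx
  have hnorm : ∀ g, ‖α g‖ = 1 := fun g => norm_eq_one_of_ae_comp_eq_mul (hmp g) hr hr0 (heigG g)
  have hadd : ∀ g h, α (g + h) = α g * α h :=
    map_add_eq_mul_of_ae_comp_eq_mul hmp hhom
      (hr.mono fun x (hx : ‖f x‖ = r) => norm_ne_zero_iff.1 (hx ▸ hr0)) heigG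
  have hmeas : Measurable α :=
    (Complex.continuous_conj.measurable.comp
      (measurable_integral_mul_conj_comp hf.1 hmp hT)).div_const _
  exact ⟨α, continuous_of_measurable_of_map_add_eq_mul hmeas hnorm hadd, hnorm, hadd, heigG⟩

theorem stmt_13_general
    (G : Type*) [TopologicalSpace G] [AddCommGroup G] [IsTopologicalAddGroup G]
    [LocallyCompactSpace G] [SecondCountableTopology G]
    [MeasurableSpace G] [BorelSpace G]
    (X : Type*) [MeasurableSpace X] (μ : Measure X) [IsProbabilityMeasure μ]
    (T : G → X → X)
    (hmp : ∀ g, MeasurePreserving (T g) μ μ)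
    (hhom : ∀ g h x, T (g + h) x = T g (T h x))
    (hTmeas : Measurable fun p : G × X => T p.1 p.2)
    (hwm : ∀ γ : G → ℂ, Continuous γ → (∀ g, ‖γ g‖ = 1) →
      (∀ g h, γ (g + h) = γ g * γ h) →
      ∀ f : X → ℂ, MemLp f 2 μ →
        (∀ g, (fun x => f (T g x)) =ᵐ[μ] fun x => γ g * f x) →
        ∃ c : ℂ, f =ᵐ[μ] fun _ => c)
    (H : AddSubgroup G) :
    (∀ χ : ↥H → ℂ, Continuous χ → (∀ h, ‖χ h‖ = 1) →
      (∀ h h', χ (h + h') = χ h * χ h') →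
      ∀ f : X → ℂ, MemLp f 2 μ →
        (∀ h : ↥H, (fun x => f (T (h : G) x)) =ᵐ[μ] fun x => χ h * f x) →
        ∃ c : ℂ, f =ᵐ[μ] fun _ => c) ↔
    (∀ f : X → ℂ, MemLp f 2 μ →
      (∀ h : ↥H, (fun x => f (T (h : G) x)) =ᵐ[μ] f) →
      ∃ c : ℂ, f =ᵐ[μ] fun _ => c) := by
  constructor
  · intro hwmH f hf hinv
    exact hwmH 1 continuous_const (fun _ => norm_one) (fun _ _ => (mul_one 1).symm) f hf
      fun h => by simpa using hinv h
  · intro herg χ _ hχ _ f hf heig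
    have hcomm : ∀ g (h : H) x, T g (T h x) = T h (T g x) := fun g h x => by
      rw [← hhom, add_comm, hhom]
    obtain ⟨α, hαc, hαn, hαa, hαeig⟩ :=
      L2Ergodic.exists_character_of_commute (S := fun h : H => T h) hmp hhom hTmeas herg hcomm
        hχ hf heig
    exact hwm α hαc hαn hαa f hf hαeig

/-- Let `T` be a weak mixing measure-preserving `G`-action (every
eigenfunction for a continuous unimodular character of `G` is a.e. constant) and `H ⊆ G` a
closed subgroup.  Then the restriction `T|_H` is weak mixing if and only if it is
ergodic. -/
theorem stmt_13
    (G : Type*) [TopologicalSpace G] [AddCommGroup G] [IsTopologicalAddGroup G]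
    [LocallyCompactSpace G] [SecondCountableTopology G]
    [MeasurableSpace G] [BorelSpace G]
    (X : Type*) [MeasurableSpace X] (μ : Measure X) [IsProbabilityMeasure μ]
    (T : G → X → X)
    (hmp : ∀ g, MeasurePreserving (T g) μ μ)
    (hhom : ∀ g h x, T (g + h) x = T g (T h x))
    (hid : ∀ x, T 0 x = x)
    (hTmeas : Measurable fun p : G × X => T p.1 p.2)
    (hwm : ∀ γ : G → ℂ, Continuous γ → (∀ g, ‖γ g‖ = 1) →
      (∀ g h, γ (g + h) = γ g * γ h) →
      ∀ f : X → ℂ, MemLp f 2 μ →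
        (∀ g, (fun x => f (T g x)) =ᵐ[μ] fun x => γ g * f x) →
        ∃ c : ℂ, f =ᵐ[μ] fun _ => c)
    (H : AddSubgroup G) (hH : IsClosed (H : Set G)) :
    (∀ χ : ↥H → ℂ, Continuous χ → (∀ h, ‖χ h‖ = 1) →
      (∀ h h', χ (h + h') = χ h * χ h') →
      ∀ f : X → ℂ, MemLp f 2 μ →
        (∀ h : ↥H, (fun x => f (T (h : G) x)) =ᵐ[μ] fun x => χ h * f x) →
        ∃ c : ℂ, f =ᵐ[μ] fun _ => c) ↔
    (∀ f : X → ℂ, MemLp f 2 μ →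
      (∀ h : ↥H, (fun x => f (T (h : G) x)) =ᵐ[μ] f) →
      ∃ c : ℂ, f =ᵐ[μ] fun _ => c) :=
  stmt_13_general G X μ T hmp hhom hTmeas hwm H
end
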